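/- arXiv:1707.02373 — 6 statements merged into one kernel-verified Lean document; each statement's English description precedes it below -/
import Mathlib

section
/- Suppose there exist positive constants C₀, C₁ such that for all unit vectors v, all x ∈ ℝ^l, and all sufficiently large t, C₀ t ≤ n(x, x + t v) ≤ C₁ t, and that n satisfies the triangle inequality. Then the map v ↦ limsup_{t→∞} sup_{x ∈ ℝ^l} (t‖v‖ / n(x, x + t v)) is a continuous, positive, finite function on the unit sphere; moreover for unit vectors v, v′, any such directional-speed quantity d satisfies |d(v) − d(v′)| ≤ (C₁/C₀²)·‖v − v′‖ in the limit sense established via the inequality |t‖v‖/n(x,x+tv) − t‖v′‖/n(x,x+tv′)| ≤ (C₁/C₀²)‖v−v′‖ for large t. -/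
/-!
Going from `x + t • v'` to `x + t • v` is a displacement of length `t ‖v - v'‖`, so the triangle
inequality and the linear upper bound give `|n(x, x + t v) - n(x, x + t v')| ≤ C₁ t ‖v - v'‖`.
Since both values are at least `C₀ t`, the ratios `t / n(x, x + t v)` differ by at most
`(C₁ / C₀²) ‖v - v'‖`. This estimate is uniform in `x`, and all ratios lie in `[1/C₁, 1/C₀]`,
so it passes to the supremum over `x` and then to the `limsup` in `t`.
-/

open Filter Set

lemma ciSup_mem_Icc {ι : Type*} [Nonempty ι] {f : ι → ℝ} {a b : ℝ}
    (hf : ∀ i, f i ∈ Icc a b) : (⨆ i, f i) ∈ Icc a b :=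
  ⟨(hf (Classical.arbitrary ι)).1.trans (le_ciSup ⟨b, by rintro _ ⟨i, rfl⟩; exact (hf i).2⟩ _),
    ciSup_le fun i => (hf i).2⟩

lemma abs_ciSup_sub_ciSup_le {ι : Type*} [Nonempty ι] {f g : ι → ℝ} {ε : ℝ}
    (hf : BddAbove (range f)) (hg : BddAbove (range g)) (h : ∀ i, |f i - g i| ≤ ε) :
    |(⨆ i, f i) - ⨆ i, g i| ≤ ε := by
  rw [abs_sub_le_iff, sub_le_iff_le_add, sub_le_iff_le_add]
  constructor
  · exact ciSup_le fun i => by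
      linarith [(abs_sub_le_iff.mp (h i)).1, le_ciSup hg i]
  · exact ciSup_le fun i => by
      linarith [(abs_sub_le_iff.mp (h i)).2, le_ciSup hf i]

lemma limsup_le_limsup_add_of_mem_Icc {α : Type*} {f : Filter α} [NeBot f] {u w : α → ℝ}
    {a b ε : ℝ} (hu : ∀ᶠ i in f, u i ∈ Icc a b) (hw : ∀ᶠ i in f, w i ∈ Icc a b)
    (h : ∀ᶠ i in f, u i ≤ w i + ε) : limsup u f ≤ limsup w f + ε := by
  have hw_bdd : IsBoundedUnder (· ≤ ·) f w :=
    isBoundedUnder_of_eventually_le (hw.mono fun _ h => h.2)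
  have hw_cobdd : IsCoboundedUnder (· ≤ ·) f w :=
    isCoboundedUnder_le_of_eventually_le f (hw.mono fun _ h => h.1)
  calc limsup u f ≤ limsup (fun i => w i + ε) f :=
        limsup_le_limsup h (isCoboundedUnder_le_of_eventually_le f (hu.mono fun _ h => h.1))
          (isBoundedUnder_of_eventually_le (a := b + ε) (hw.mono fun _ h => by linarith [h.2]))
    _ = limsup w f + ε := limsup_add_const f w ε hw_bdd hw_cobdd

lemma abs_limsup_sub_limsup_le_of_mem_Icc {α : Type*} {f : Filter α} [NeBot f] {u w : α → ℝ}
    {a b ε : ℝ} (hu : ∀ᶠ i in f, u i ∈ Icc a b) (hw : ∀ᶠ i in f, w i ∈ Icc a b)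
    (h : ∀ᶠ i in f, |u i - w i| ≤ ε) : |limsup u f - limsup w f| ≤ ε := by
  rw [abs_sub_le_iff, sub_le_iff_le_add', sub_le_iff_le_add']
  exact ⟨limsup_le_limsup_add_of_mem_Icc hu hw
      (h.mono fun _ h => sub_le_iff_le_add'.mp (abs_sub_le_iff.mp h).1),
    limsup_le_limsup_add_of_mem_Icc hw hu
      (h.mono fun _ h => sub_le_iff_le_add'.mp (abs_sub_le_iff.mp h).2)⟩

lemma abs_div_sub_div_le {a b c t δ : ℝ} (hc : 0 < c) (ht : 0 < t) (ha : c * t ≤ a)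
    (hb : c * t ≤ b) (hab : |a - b| ≤ δ * t) : |t / a - t / b| ≤ δ / c ^ 2 := by
  have ha₀ : 0 < a := (mul_pos hc ht).trans_le ha
  have hb₀ : 0 < b := (mul_pos hc ht).trans_le hb
  calc |t / a - t / b| = t * |a - b| / (a * b) := by
        rw [div_sub_div _ _ ha₀.ne' hb₀.ne', abs_div, abs_of_pos (mul_pos ha₀ hb₀),
          show t * b - a * t = t * (b - a) by ring, abs_mul, abs_of_pos ht, abs_sub_comm]
    _ ≤ t * (δ * t) / ((c * t) * (c * t)) := by
        have hδt : 0 ≤ δ * t := (abs_nonneg _).trans hab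
        gcongr
    _ = δ / c ^ 2 := by field_simp

section Speed

variable {E : Type*} [NormedAddCommGroup E] [NormedSpace ℝ E] {ρ : E → E → ℝ} {C₀ C₁ : ℝ}

/-- The directional speed `d̄₁` of the paper. -/
noncomputable def upperSpeed (ρ : E → E → ℝ) (v : E) : ℝ :=
  limsup (fun t : ℝ => ⨆ x, t * ‖v‖ / ρ x (x + t • v)) atTop

lemma eventually_le_mul_dist
    (hupper : ∀ᶠ t in atTop, ∀ x v : E, ‖v‖ = 1 → ρ x (x + t • v) ≤ C₁ * t) :
    ∀ᶠ r in atTop, ∀ y z : E, dist y z = r → ρ y z ≤ C₁ * r := by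
  filter_upwards [hupper, eventually_gt_atTop 0] with r hr hr₀ y z hyz
  have hunit : ‖r⁻¹ • (z - y)‖ = 1 := by
    rw [norm_smul, norm_inv, ← dist_eq_norm', hyz, Real.norm_of_nonneg hr₀.le,
      inv_mul_cancel₀ hr₀.ne']
  simpa [smul_smul, mul_inv_cancel₀ hr₀.ne'] using hr y _ hunit

lemma eventually_abs_sub_le (htri : ∀ x y z, ρ x z ≤ ρ x y + ρ y z)
    (hupper : ∀ᶠ t in atTop, ∀ x v : E, ‖v‖ = 1 → ρ x (x + t • v) ≤ C₁ * t) (v v' : E) :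
    ∀ᶠ t in atTop, ∀ x, |ρ x (x + t • v) - ρ x (x + t • v')| ≤ C₁ * ‖v - v'‖ * t := by
  rcases eq_or_ne v v' with rfl | hne
  · exact Eventually.of_forall fun t x => by simp
  have hdist : Tendsto (fun t => t * ‖v - v'‖) atTop atTop :=
    tendsto_id.atTop_mul_const (norm_pos_iff.mpr (sub_ne_zero.mpr hne))
  filter_upwards [hdist.eventually (eventually_le_mul_dist hupper), eventually_ge_atTop 0]
    with t hle ht₀ x
  have hd : dist (x + t • v) (x + t • v') = t * ‖v - v'‖ := by
    rw [dist_add_left, dist_eq_norm, ← smul_sub, norm_smul, Real.norm_of_nonneg ht₀]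
  have h₁ := hle _ _ hd
  have h₂ := hle _ _ ((dist_comm _ _).trans hd)
  rw [abs_sub_le_iff]
  constructor <;> linarith [htri x (x + t • v') (x + t • v), htri x (x + t • v) (x + t • v')]

def HasLinearBounds (ρ : E → E → ℝ) (C₀ C₁ : ℝ) : Prop :=
  ∀ᶠ t in atTop, ∀ x v : E, ‖v‖ = 1 → C₀ * t ≤ ρ x (x + t • v) ∧ ρ x (x + t • v) ≤ C₁ * t

lemma eventually_ratio_mem_Icc (hC₀ : 0 < C₀) (hC₁ : 0 < C₁) (hbound : HasLinearBounds ρ C₀ C₁)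
    {v : E} (hv : ‖v‖ = 1) :
    ∀ᶠ t in atTop, ∀ x, t * ‖v‖ / ρ x (x + t • v) ∈ Icc (1 / C₁) (1 / C₀) := by
  filter_upwards [hbound, eventually_gt_atTop 0] with t h ht x
  obtain ⟨hlo, hhi⟩ := h x v hv
  have hρ : 0 < ρ x (x + t • v) := (mul_pos hC₀ ht).trans_le hlo
  rw [hv, mul_one]
  constructor
  · rw [div_le_div_iff₀ hC₁ hρ]; linarith
  · rw [div_le_div_iff₀ hρ hC₀]; linarith

lemma eventually_iSup_ratio_mem_Icc (hC₀ : 0 < C₀) (hC₁ : 0 < C₁)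
    (hbound : HasLinearBounds ρ C₀ C₁) {v : E} (hv : ‖v‖ = 1) :
    ∀ᶠ t in atTop, (⨆ x, t * ‖v‖ / ρ x (x + t • v)) ∈ Icc (1 / C₁) (1 / C₀) :=
  (eventually_ratio_mem_Icc hC₀ hC₁ hbound hv).mono fun _ h => ciSup_mem_Icc h

lemma one_div_le_upperSpeed (hC₀ : 0 < C₀) (hC₁ : 0 < C₁) (hbound : HasLinearBounds ρ C₀ C₁)
    {v : E} (hv : ‖v‖ = 1) : 1 / C₁ ≤ upperSpeed ρ v := by
  have h := eventually_iSup_ratio_mem_Icc hC₀ hC₁ hbound hv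
  exact le_limsup_of_frequently_le (h.mono fun _ h => h.1).frequently
    (isBoundedUnder_of_eventually_le (h.mono fun _ h => h.2))

lemma eventually_abs_ratio_sub_le (htri : ∀ x y z, ρ x z ≤ ρ x y + ρ y z) (hC₀ : 0 < C₀)
    (hbound : HasLinearBounds ρ C₀ C₁) {v v' : E} (hv : ‖v‖ = 1) (hv' : ‖v'‖ = 1) :
    ∀ᶠ t in atTop, ∀ x, |t * ‖v‖ / ρ x (x + t • v) - t * ‖v'‖ / ρ x (x + t • v')| ≤
      C₁ / C₀ ^ 2 * ‖v - v'‖ := by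
  filter_upwards [hbound, eventually_gt_atTop 0,
    eventually_abs_sub_le htri (hbound.mono fun _ h x v hv => (h x v hv).2) v v']
    with t hb ht hdiff x
  rw [hv, hv', mul_one, div_mul_eq_mul_div]
  exact abs_div_sub_div_le hC₀ ht (hb x v hv).1 (hb x v' hv').1 (hdiff x)

lemma abs_upperSpeed_sub_le (htri : ∀ x y z, ρ x z ≤ ρ x y + ρ y z) (hC₀ : 0 < C₀)
    (hC₁ : 0 < C₁) (hbound : HasLinearBounds ρ C₀ C₁) {v v' : E} (hv : ‖v‖ = 1) (hv' : ‖v'‖ = 1) :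
    |upperSpeed ρ v - upperSpeed ρ v'| ≤ C₁ / C₀ ^ 2 * ‖v - v'‖ := by
  refine abs_limsup_sub_limsup_le_of_mem_Icc (eventually_iSup_ratio_mem_Icc hC₀ hC₁ hbound hv)
    (eventually_iSup_ratio_mem_Icc hC₀ hC₁ hbound hv') ?_
  filter_upwards [eventually_abs_ratio_sub_le htri hC₀ hbound hv hv',
    eventually_ratio_mem_Icc hC₀ hC₁ hbound hv, eventually_ratio_mem_Icc hC₀ hC₁ hbound hv']
    with t h hmem hmem'
  exact abs_ciSup_sub_ciSup_le ⟨_, by rintro _ ⟨x, rfl⟩; exact (hmem x).2⟩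
    ⟨_, by rintro _ ⟨x, rfl⟩; exact (hmem' x).2⟩ h

lemma lipschitzOnWith_upperSpeed (htri : ∀ x y z, ρ x z ≤ ρ x y + ρ y z) (hC₀ : 0 < C₀)
    (hC₁ : 0 < C₁) (hbound : HasLinearBounds ρ C₀ C₁) :
    LipschitzOnWith (C₁ / C₀ ^ 2).toNNReal (upperSpeed ρ) (Metric.sphere 0 1) :=
  LipschitzOnWith.of_dist_le' fun v hv v' hv' => by
    rw [Real.dist_eq, dist_eq_norm]
    exact abs_upperSpeed_sub_le htri hC₀ hC₁ hbound (mem_sphere_zero_iff_norm.mp hv)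
      (mem_sphere_zero_iff_norm.mp hv')

end Speed

/-- under linear upper and lower bounds `C₀ t ≤ n(x,x+tv) ≤ C₁ t` (for all
`x`, unit `v` and sufficiently large `t`) and the triangle inequality for `n`, the
directional speed `d(v) = limsup_{t→∞} sup_x t‖v‖/n(x,x+tv)` is a continuous, positive
(real-valued, hence finite) function on the unit sphere; moreover it is
`(C₁/C₀²)`-Lipschitz on unit vectors, via the pointwise inequality
`|t‖v‖/n(x,x+tv) − t‖v′‖/n(x,x+tv′)| ≤ (C₁/C₀²)‖v−v′‖` for large `t`. -/
theorem stmt_8 {l : ℕ}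
    (n : EuclideanSpace ℝ (Fin l) → EuclideanSpace ℝ (Fin l) → ℕ)
    (C₀ C₁ : ℝ) (hC₀ : 0 < C₀) (hC₁ : 0 < C₁)
    (htri : ∀ x y z, n x z ≤ n x y + n y z)
    (hbound : ∀ᶠ t in Filter.atTop, ∀ (x v : EuclideanSpace ℝ (Fin l)), ‖v‖ = 1 →
      C₀ * t ≤ (n x (x + t • v) : ℝ) ∧ (n x (x + t • v) : ℝ) ≤ C₁ * t) :
    let d : EuclideanSpace ℝ (Fin l) → ℝ := fun v =>
      Filter.limsup (fun t : ℝ => ⨆ x, t * ‖v‖ / (n x (x + t • v) : ℝ)) Filter.atTop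
    ContinuousOn d (Metric.sphere (0 : EuclideanSpace ℝ (Fin l)) 1) ∧
    (∀ v ∈ Metric.sphere (0 : EuclideanSpace ℝ (Fin l)) 1, 0 < d v) ∧
    (∀ v ∈ Metric.sphere (0 : EuclideanSpace ℝ (Fin l)) 1,
      ∀ v' ∈ Metric.sphere (0 : EuclideanSpace ℝ (Fin l)) 1,
        (∀ᶠ t in Filter.atTop, ∀ x,
          |t * ‖v‖ / (n x (x + t • v) : ℝ) - t * ‖v'‖ / (n x (x + t • v') : ℝ)| ≤
            (C₁ / C₀ ^ 2) * ‖v - v'‖) ∧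
        |d v - d v'| ≤ (C₁ / C₀ ^ 2) * ‖v - v'‖) := by
  intro d
  have htri' : ∀ x y z, (n x z : ℝ) ≤ n x y + n y z := fun x y z => by exact_mod_cast htri x y z
  have hlin : HasLinearBounds (fun x y => (n x y : ℝ)) C₀ C₁ := hbound
  refine ⟨(lipschitzOnWith_upperSpeed htri' hC₀ hC₁ hlin).continuousOn, fun v hv => ?_,
    fun v hv v' hv' => ⟨?_, ?_⟩⟩ <;> rw [mem_sphere_zero_iff_norm] at *
  · exact (one_div_pos.mpr hC₁).trans_le (one_div_le_upperSpeed hC₀ hC₁ hlin hv)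
  · exact eventually_abs_ratio_sub_le htri' hC₀ hlin hv hv'
  · exact abs_upperSpeed_sub_le htri' hC₀ hC₁ hlin hv hv'
end

section
/- Fix a unit vector v. The following are equivalent: (a) for every ε>0 there exists a relatively dense set S ⊆ ℝ^l such that liminf_{t→∞} t‖v‖/n(x,x+tv) > d̄₂(v) − ε for all x ∈ S; (b) t‖v‖/n(x,x+tv) converges as t → ∞ to a value independent of x; (c) d̄₂(v) = d̲₂(v). (Assume n satisfies the triangle inequality, |n(y,y+tv) − n(x,x+tv)| ≤ 2C₁‖x−y‖ for a constant C₁, and the linear bounds C₀t ≤ n(x,x+tv) ≤ C₁t for large t.) -/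
/-!
The Lipschitz-type hypothesis on `n` makes `n(y, y + tv) - n(x, x + tv)` bounded in `t`, while
both terms grow at least linearly, so the ratios `t‖v‖ / n(x, x + tv)` at any two base points
differ by `O(1/t)`. Hence their limsup and liminf do not depend on `x`: `d̄₂(v)` and `d̲₂(v)` are
the limsup and liminf of one bounded function. Then (b) ⇔ (c) is convergence as
`liminf = limsup`, and in (a) a single point of `S` already gives `d̄₂(v) - ε ≤ d̲₂(v)`.
-/

open Filter Topology

section AsymptoticallyEqual

variable {α : Type*} {l : Filter α} [l.NeBot] {f g : α → ℝ}

theorem limsup_le_limsup_of_tendsto_sub (hg : IsBoundedUnder (· ≤ ·) l g)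
    (hg' : IsBoundedUnder (· ≥ ·) l g) (h : Tendsto (f - g) l (𝓝 0)) :
    limsup f l ≤ limsup g l := by
  have := limsup_add_le h.isBoundedUnder_ge h.isBoundedUnder_le hg'.isCoboundedUnder_le hg
  simpa only [sub_add_cancel, h.limsup_eq, zero_add] using this

theorem liminf_le_liminf_of_tendsto_sub (hf : IsBoundedUnder (· ≤ ·) l f)
    (hf' : IsBoundedUnder (· ≥ ·) l f) (h : Tendsto (g - f) l (𝓝 0)) :
    liminf f l ≤ liminf g l := by
  have := le_liminf_add hf' hf h.isBoundedUnder_ge h.isBoundedUnder_le.isCoboundedUnder_ge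
  simpa only [add_sub_cancel, h.liminf_eq, add_zero] using this

end AsymptoticallyEqual

def IsRelativelyDense {E : Type*} [PseudoMetricSpace E] (S : Set E) : Prop :=
  ∃ R > (0 : ℝ), ∀ x, (Metric.ball x R ∩ S).Nonempty

theorem IsRelativelyDense.nonempty {E : Type*} [PseudoMetricSpace E] [Nonempty E] {S : Set E}
    (hS : IsRelativelyDense S) : S.Nonempty :=
  let ⟨_, _, h⟩ := hS
  (h (Classical.arbitrary E)).mono Set.inter_subset_right

theorem isRelativelyDense_univ {E : Type*} [PseudoMetricSpace E] :
    IsRelativelyDense (Set.univ : Set E) :=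
  ⟨1, one_pos, fun x => ⟨x, Metric.mem_ball_self one_pos, trivial⟩⟩

section Family

variable {ι α : Type*} {l : Filter α} [l.NeBot] {F : ι → α → ℝ}

theorem iSup_limsup_eq_of_tendsto_sub (hle : ∀ i, IsBoundedUnder (· ≤ ·) l (F i))
    (hge : ∀ i, IsBoundedUnder (· ≥ ·) l (F i)) (hF : ∀ i j, Tendsto (F i - F j) l (𝓝 0))
    (i : ι) : ⨆ j, limsup (F j) l = limsup (F i) l := by
  have : Nonempty ι := ⟨i⟩
  refine (iSup_congr fun j => le_antisymm ?_ ?_).trans ciSup_const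
  · exact limsup_le_limsup_of_tendsto_sub (hle i) (hge i) (hF j i)
  · exact limsup_le_limsup_of_tendsto_sub (hle j) (hge j) (hF i j)

theorem iInf_liminf_eq_of_tendsto_sub (hle : ∀ i, IsBoundedUnder (· ≤ ·) l (F i))
    (hge : ∀ i, IsBoundedUnder (· ≥ ·) l (F i)) (hF : ∀ i j, Tendsto (F i - F j) l (𝓝 0))
    (i : ι) : ⨅ j, liminf (F j) l = liminf (F i) l := by
  have : Nonempty ι := ⟨i⟩
  refine (iInf_congr fun j => le_antisymm ?_ ?_).trans ciInf_const
  · exact liminf_le_liminf_of_tendsto_sub (hle j) (hge j) (hF i j)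
  · exact liminf_le_liminf_of_tendsto_sub (hle i) (hge i) (hF j i)

theorem exists_forall_tendsto_iff_iSup_limsup_eq_iInf_liminf [Nonempty ι]
    (hle : ∀ i, IsBoundedUnder (· ≤ ·) l (F i)) (hge : ∀ i, IsBoundedUnder (· ≥ ·) l (F i))
    (hF : ∀ i j, Tendsto (F i - F j) l (𝓝 0)) :
    (∃ L, ∀ i, Tendsto (F i) l (𝓝 L)) ↔ ⨆ i, limsup (F i) l = ⨅ i, liminf (F i) l := by
  constructor
  · rintro ⟨L, hL⟩
    simp only [fun i => (hL i).limsup_eq, fun i => (hL i).liminf_eq, ciSup_const, ciInf_const]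
  · intro h
    refine ⟨⨆ i, limsup (F i) l, fun i => tendsto_of_liminf_eq_limsup ?_ ?_ (hle i) (hge i)⟩
    · rw [h, iInf_liminf_eq_of_tendsto_sub hle hge hF i]
    · rw [iSup_limsup_eq_of_tendsto_sub hle hge hF i]

theorem forall_exists_isRelativelyDense_iff_iSup_limsup_eq_iInf_liminf
    [PseudoMetricSpace ι] [Nonempty ι]
    (hle : ∀ i, IsBoundedUnder (· ≤ ·) l (F i)) (hge : ∀ i, IsBoundedUnder (· ≥ ·) l (F i))
    (hF : ∀ i j, Tendsto (F i - F j) l (𝓝 0)) :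
    (∀ ε > 0, ∃ S : Set ι, IsRelativelyDense S ∧
      ∀ x ∈ S, (⨆ i, limsup (F i) l) - ε < liminf (F x) l) ↔
      ⨆ i, limsup (F i) l = ⨅ i, liminf (F i) l := by
  inhabit ι
  have hsup := iSup_limsup_eq_of_tendsto_sub hle hge hF default
  have hinf : ∀ x, liminf (F x) l = ⨅ i, liminf (F i) l :=
    fun x => (iInf_liminf_eq_of_tendsto_sub hle hge hF x).symm
  constructor
  · intro h
    refine le_antisymm (le_of_forall_pos_le_add fun ε hε => ?_) ?_
    · obtain ⟨S, hS, hlt⟩ := h ε hε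
      obtain ⟨x, hx⟩ := hS.nonempty
      linarith [hlt x hx, hinf x]
    · rw [hsup, ← hinf default]
      exact liminf_le_limsup (hle default) (hge default)
  · intro h ε hε
    exact ⟨Set.univ, isRelativelyDense_univ, fun x _ => by linarith [hinf x]⟩

end Family

theorem tendsto_div_sub_div_of_abs_sub_le {a b : ℝ → ℝ} {c B : ℝ} (hc : 0 < c)
    (ha : ∀ᶠ t in atTop, c * t ≤ a t) (hb : ∀ᶠ t in atTop, c * t ≤ b t)
    (hab : ∀ t, |b t - a t| ≤ B) :
    Tendsto (fun t => t / a t - t / b t) atTop (𝓝 0) := by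
  have hlim : Tendsto (fun t => B / (c * c * t)) atTop (𝓝 0) :=
    tendsto_const_nhds.div_atTop (tendsto_id.const_mul_atTop (by positivity))
  refine squeeze_zero_norm' ?_ hlim
  filter_upwards [ha, hb, eventually_gt_atTop 0] with t hat hbt ht
  have ha0 : 0 < a t := (mul_pos hc ht).trans_le hat
  have hb0 : 0 < b t := (mul_pos hc ht).trans_le hbt
  calc ‖t / a t - t / b t‖ = |t * (b t - a t) / (a t * b t)| := by
        rw [Real.norm_eq_abs]; congr 1; field_simp
    _ = t * |b t - a t| / (a t * b t) := by
        rw [abs_div, abs_mul, abs_of_pos ht, abs_of_pos (mul_pos ha0 hb0)]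
    _ ≤ t * B / ((c * t) * (c * t)) := by
        gcongr
        · exact mul_nonneg ht.le ((abs_nonneg _).trans (hab t))
        · exact hab t
    _ = B / (c * c * t) := by field_simp

section DirectionalRatio

variable {E : Type*} [NormedAddCommGroup E] [NormedSpace ℝ E]

noncomputable def directionalRatio (n : E → E → ℕ) (v x : E) (t : ℝ) : ℝ :=
  t * ‖v‖ / n x (x + t • v)

theorem isBoundedUnder_ge_directionalRatio (n : E → E → ℕ) (v x : E) :
    IsBoundedUnder (· ≥ ·) atTop (directionalRatio n v x) :=
  isBoundedUnder_of_eventually_ge <| (eventually_ge_atTop 0).mono fun t ht => by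
    unfold directionalRatio; positivity

theorem isBoundedUnder_le_directionalRatio {n : E → E → ℕ} {v x : E} {c : ℝ} (hc : 0 < c)
    (hn : ∀ᶠ t in atTop, c * t ≤ n x (x + t • v)) :
    IsBoundedUnder (· ≤ ·) atTop (directionalRatio n v x) := by
  refine isBoundedUnder_of_eventually_le (a := ‖v‖ / c) ?_
  filter_upwards [hn, eventually_gt_atTop 0] with t hnt ht
  have hn0 : (0 : ℝ) < n x (x + t • v) := (mul_pos hc ht).trans_le hnt
  rw [directionalRatio, div_le_div_iff₀ hn0 hc]
  nlinarith [norm_nonneg v]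

theorem tendsto_directionalRatio_sub {n : E → E → ℕ} {v x y : E} {c B : ℝ} (hc : 0 < c)
    (hx : ∀ᶠ t in atTop, c * t ≤ n x (x + t • v)) (hy : ∀ᶠ t in atTop, c * t ≤ n y (y + t • v))
    (hxy : ∀ t : ℝ, |(n y (y + t • v) : ℝ) - n x (x + t • v)| ≤ B) :
    Tendsto (directionalRatio n v x - directionalRatio n v y) atTop (𝓝 0) := by
  have := (tendsto_div_sub_div_of_abs_sub_le hc hx hy hxy).mul_const ‖v‖
  rw [zero_mul] at this
  refine this.congr fun t => ?_
  simp only [directionalRatio, Pi.sub_apply, sub_mul, mul_div_right_comm]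

end DirectionalRatio

theorem stmt_9_general {l : ℕ}
    (n : EuclideanSpace ℝ (Fin l) → EuclideanSpace ℝ (Fin l) → ℕ)
    (v : EuclideanSpace ℝ (Fin l))
    (C₀ C₁ : ℝ) (hC₀ : 0 < C₀)
    (hlip : ∀ (x y : EuclideanSpace ℝ (Fin l)) (t : ℝ),
      |(n y (y + t • v) : ℝ) - (n x (x + t • v) : ℝ)| ≤ 2 * C₁ * ‖x - y‖)
    (hbound : ∀ x, ∀ᶠ t in Filter.atTop,
      C₀ * t ≤ (n x (x + t • v) : ℝ) ∧ (n x (x + t • v) : ℝ) ≤ C₁ * t) :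
    let F : EuclideanSpace ℝ (Fin l) → ℝ → ℝ :=
      fun x t => t * ‖v‖ / (n x (x + t • v) : ℝ)
    let d2u : ℝ := ⨆ x, Filter.limsup (F x) Filter.atTop
    let d2l : ℝ := ⨅ x, Filter.liminf (F x) Filter.atTop
    ((∀ ε > (0 : ℝ), ∃ S : Set (EuclideanSpace ℝ (Fin l)),
        (∃ R > (0 : ℝ), ∀ x, (Metric.ball x R ∩ S).Nonempty) ∧
        ∀ x ∈ S, d2u - ε < Filter.liminf (F x) Filter.atTop) ↔
      (∃ L : ℝ, ∀ x, Filter.Tendsto (F x) Filter.atTop (nhds L))) ∧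
    ((∃ L : ℝ, ∀ x, Filter.Tendsto (F x) Filter.atTop (nhds L)) ↔ d2u = d2l) := by
  intro F d2u d2l
  have hlow x : ∀ᶠ t in atTop, C₀ * t ≤ n x (x + t • v) := (hbound x).mono fun _ h => h.1
  have hle x := isBoundedUnder_le_directionalRatio hC₀ (hlow x)
  have hge := isBoundedUnder_ge_directionalRatio n v
  have hF x y := tendsto_directionalRatio_sub hC₀ (hlow x) (hlow y) (hlip x y)
  have hbc := exists_forall_tendsto_iff_iSup_limsup_eq_iInf_liminf hle hge hF
  have hac := forall_exists_isRelativelyDense_iff_iSup_limsup_eq_iInf_liminf hle hge hF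
  exact ⟨hac.trans hbc.symm, hbc⟩

/-- Directional Speed. Fix a unit vector `v`. The following are
equivalent: (a) for every `ε > 0` there is a relatively dense set `S` such that
`liminf_{t→∞} t‖v‖/n(x,x+tv) > d̄₂(v) − ε` for all `x ∈ S`; (b) `t‖v‖/n(x,x+tv)`
converges as `t → ∞` to a value independent of `x`; (c) `d̄₂(v) = d̲₂(v)`. -/
theorem stmt_9 {l : ℕ}
    (n : EuclideanSpace ℝ (Fin l) → EuclideanSpace ℝ (Fin l) → ℕ)
    (v : EuclideanSpace ℝ (Fin l)) (hv : ‖v‖ = 1)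
    (C₀ C₁ : ℝ) (hC₀ : 0 < C₀) (hC₁ : 0 < C₁)
    (htri : ∀ x y z, n x z ≤ n x y + n y z)
    (hlip : ∀ (x y : EuclideanSpace ℝ (Fin l)) (t : ℝ),
      |(n y (y + t • v) : ℝ) - (n x (x + t • v) : ℝ)| ≤ 2 * C₁ * ‖x - y‖)
    (hbound : ∀ x, ∀ᶠ t in Filter.atTop,
      C₀ * t ≤ (n x (x + t • v) : ℝ) ∧ (n x (x + t • v) : ℝ) ≤ C₁ * t) :
    let F : EuclideanSpace ℝ (Fin l) → ℝ → ℝ :=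
      fun x t => t * ‖v‖ / (n x (x + t • v) : ℝ)
    let d2u : ℝ := ⨆ x, Filter.limsup (F x) Filter.atTop
    let d2l : ℝ := ⨅ x, Filter.liminf (F x) Filter.atTop
    ((∀ ε > (0 : ℝ), ∃ S : Set (EuclideanSpace ℝ (Fin l)),
        (∃ R > (0 : ℝ), ∀ x, (Metric.ball x R ∩ S).Nonempty) ∧
        ∀ x ∈ S, d2u - ε < Filter.liminf (F x) Filter.atTop) ↔
      (∃ L : ℝ, ∀ x, Filter.Tendsto (F x) Filter.atTop (nhds L))) ∧
    ((∃ L : ℝ, ∀ x, Filter.Tendsto (F x) Filter.atTop (nhds L)) ↔ d2u = d2l) :=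
  stmt_9_general n v C₀ C₁ hC₀ hlip hbound
end

section
/- Consider the tiling of ℝ where [0,∞) is tiled by translates of [0,2] (intervals [2k, 2k+2], k ≥ 0) and (−∞,0] by translates of [0,1] (intervals [−k−1,−k], k ≥ 0), with point adjacency. For the direction v = 1 (growth to the right), the directional speeds satisfy d̲₁(1) = 1 and d̲₂(1) = d̄₂(1) = d̄₁(1) = 2; for v = −1, d̲₁(−1) = d̲₂(−1) = d̄₂(−1) = 1 and d̄₁(−1) = 2. -/
/-- The tiling of `ℝ` where `[0,∞)` is tiled by translates of `[0,2]` and `(−∞,0]`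
by translates of `[0,1]`: tile `k` is `[2k, 2k+2]` for `k ≥ 0` and `[k, k+1]` for
`k < 0`. -/
noncomputable def tile13 : ℤ → Set ℝ := fun k =>
  if 0 ≤ k then Set.Icc (2 * (k : ℝ)) (2 * (k : ℝ) + 2)
  else Set.Icc ((k : ℝ)) ((k : ℝ) + 1)

/-- The combinatorial patch distance for this tiling (with point adjacency, a
minimal connected patch containing `x` and `y` is a run of consecutive tiles):
`n13 x y + 1` is the minimal cardinality of a connected patch whose support
contains both `x` and `y`. -/
noncomputable def n13 (x y : ℝ) : ℕ :=
  sInf {m | ∃ i j : ℤ, x ∈ tile13 i ∧ y ∈ tile13 j ∧ (i - j).natAbs = m}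

open Filter Set

noncomputable def L13 : ℤ → ℝ := fun k => if 0 ≤ k then 2*(k:ℝ) else (k:ℝ)

lemma natAbs_cast13 (i j : ℤ) : (((i - j).natAbs : ℕ) : ℝ) = |(i:ℝ) - (j:ℝ)| := by
  rw [Nat.cast_natAbs]; push_cast; ring_nf

lemma tile_sub {i : ℤ} {x : ℝ} (h : x ∈ tile13 i) : L13 i ≤ x ∧ x ≤ L13 i + 2 := by
  unfold tile13 L13 at *
  by_cases h0 : 0 ≤ i <;> simp only [h0, if_true, if_false, Set.mem_Icc] at h ⊢ <;>
    constructor <;> linarith [h.1, h.2]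

lemma L13_bound {i j : ℤ} (h : i ≤ j) :
    ((j:ℝ) - i) ≤ L13 j - L13 i ∧ L13 j - L13 i ≤ 2*((j:ℝ) - i) := by
  have hij : (i:ℝ) ≤ j := by exact_mod_cast h
  unfold L13
  by_cases hi : 0 ≤ i <;> by_cases hj : 0 ≤ j
  · simp only [hi, hj, if_true]
    have : (0:ℝ) ≤ i := by exact_mod_cast hi
    constructor <;> linarith
  · exact absurd (hi.trans h) hj
  · simp only [hi, hj, if_true, if_false]
    have h1 : (i:ℝ) < 0 := by exact_mod_cast Int.not_le.mp hi
    have h2 : (0:ℝ) ≤ j := by exact_mod_cast hj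
    constructor <;> linarith
  · simp only [hi, hj, if_false]
    constructor <;> linarith

lemma L13_abs (i j : ℤ) : |(i:ℝ) - j| ≤ |L13 i - L13 j| ∧ |L13 i - L13 j| ≤ 2*|(i:ℝ) - j| := by
  rcases le_total i j with h | h
  · obtain ⟨h1, h2⟩ := L13_bound h
    have hji : (i:ℝ) ≤ j := by exact_mod_cast h
    rw [abs_sub_comm (i:ℝ), abs_of_nonneg (by linarith : (0:ℝ) ≤ (j:ℝ) - i),
      abs_sub_comm (L13 i), abs_of_nonneg (by linarith : (0:ℝ) ≤ L13 j - L13 i)]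
    constructor <;> linarith
  · obtain ⟨h1, h2⟩ := L13_bound h
    have hji : (j:ℝ) ≤ i := by exact_mod_cast h
    rw [abs_of_nonneg (by linarith : (0:ℝ) ≤ (i:ℝ) - j),
      abs_of_nonneg (by linarith : (0:ℝ) ≤ L13 i - L13 j)]
    constructor <;> linarith

lemma n13_le13 {x y : ℝ} {i j : ℤ} (hi : x ∈ tile13 i) (hj : y ∈ tile13 j) :
    n13 x y ≤ (i - j).natAbs := Nat.sInf_le ⟨i, j, hi, hj, rfl⟩

lemma n13_le_real {x y : ℝ} {i j : ℤ} (hi : x ∈ tile13 i) (hj : y ∈ tile13 j) :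
    (n13 x y : ℝ) ≤ |(i:ℝ) - j| := by
  rw [← natAbs_cast13]; exact_mod_cast n13_le13 hi hj

lemma exists_tile13 (x : ℝ) : ∃ i, x ∈ tile13 i := by
  by_cases hx : 0 ≤ x
  · refine ⟨⌊x/2⌋, ?_⟩
    have h0 : (0:ℤ) ≤ ⌊x/2⌋ := Int.floor_nonneg.mpr (by linarith)
    have h1 := Int.floor_le (x/2)
    have h2 := Int.lt_floor_add_one (x/2)
    simp only [tile13, h0, if_true, Set.mem_Icc]
    constructor <;> linarith
  · refine ⟨⌊x⌋, ?_⟩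
    have hx' : x < 0 := lt_of_not_ge hx
    have h1 := Int.floor_le x
    have h2 := Int.lt_floor_add_one x
    have h0 : ¬ (0:ℤ) ≤ ⌊x⌋ := by
      intro h; have : (0:ℝ) ≤ ⌊x⌋ := by exact_mod_cast h
      linarith
    simp only [tile13, h0, if_false, Set.mem_Icc]
    constructor <;> linarith

lemma floor_tile13 {y : ℝ} (hy : 0 ≤ y) : y ∈ tile13 ⌊y/2⌋ := by
  have h0 : (0:ℤ) ≤ ⌊y/2⌋ := Int.floor_nonneg.mpr (by linarith)
  have h1 := Int.floor_le (y/2)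
  have h2 := Int.lt_floor_add_one (y/2)
  simp only [tile13, h0, if_true, Set.mem_Icc]
  constructor <;> linarith

lemma zero_tile13 : (0:ℝ) ∈ tile13 0 := by
  simp [tile13, Set.mem_Icc]

lemma n13_ex (x y : ℝ) : ∃ i j : ℤ, x ∈ tile13 i ∧ y ∈ tile13 j ∧ (i - j).natAbs = n13 x y := by
  obtain ⟨i, hi⟩ := exists_tile13 x
  obtain ⟨j, hj⟩ := exists_tile13 y
  have hne : {m | ∃ i j : ℤ, x ∈ tile13 i ∧ y ∈ tile13 j ∧ (i - j).natAbs = m}.Nonempty :=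
    ⟨_, i, j, hi, hj, rfl⟩
  exact Nat.sInf_mem hne

lemma n13_symm (x y : ℝ) : n13 x y = n13 y x := by
  unfold n13; congr 1; ext m
  constructor <;> rintro ⟨i, j, hi, hj, h⟩ <;> exact ⟨j, i, hj, hi, by omega⟩

lemma n13_ge (x y : ℝ) : |x - y| ≤ 2*(n13 x y : ℝ) + 2 := by
  obtain ⟨i, j, hi, hj, hn⟩ := n13_ex x y
  have hx := tile_sub hi
  have hy := tile_sub hj
  have habs := (L13_abs i j).2
  have hcast : (n13 x y : ℝ) = |(i:ℝ) - j| := by rw [← hn, natAbs_cast13]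
  have h1 : L13 i - L13 j ≤ |L13 i - L13 j| := le_abs_self _
  have h2 : L13 j - L13 i ≤ |L13 i - L13 j| := by rw [abs_sub_comm]; exact le_abs_self _
  rw [abs_sub_le_iff]
  constructor <;> linarith

lemma n13_le_global (x y : ℝ) : (n13 x y : ℝ) ≤ |x - y| + 4 := by
  obtain ⟨i, hi⟩ := exists_tile13 x
  obtain ⟨j, hj⟩ := exists_tile13 y
  have hb := n13_le_real hi hj
  have habs := (L13_abs i j).1
  have hx := tile_sub hi
  have hy := tile_sub hj
  have h1 : x - y ≤ |x - y| := le_abs_self _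
  have h2 : y - x ≤ |x - y| := by rw [abs_sub_comm]; exact le_abs_self _
  have h3 : |L13 i - L13 j| ≤ |x - y| + 2 := by
    rw [abs_sub_le_iff]; constructor <;> linarith
  linarith

lemma right_upper13 {x : ℝ} {i : ℤ} (hi : x ∈ tile13 i) {y : ℝ} (hy : 0 ≤ y) :
    (n13 x y : ℝ) ≤ |(i:ℝ)| + y/2 := by
  have hb := n13_le_real hi (floor_tile13 hy)
  have h1 : (0:ℝ) ≤ (⌊y/2⌋:ℤ) := by exact_mod_cast Int.floor_nonneg.mpr (by linarith)
  have h2 : ((⌊y/2⌋:ℤ):ℝ) ≤ y/2 := Int.floor_le _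
  have h3 : |(i:ℝ) - (⌊y/2⌋:ℤ)| ≤ |(i:ℝ)| + (⌊y/2⌋:ℤ) := by
    have := le_abs_self (i:ℝ)
    have := neg_abs_le (i:ℝ)
    rw [abs_le]; constructor <;> linarith
  linarith

lemma left_lower13 {x y : ℝ} (hy : y < 0) :
    min ((x-2)/2) (x-2) - y ≤ (n13 x y : ℝ) := by
  obtain ⟨i, j, hi, hj, hn⟩ := n13_ex x y
  have hj' : ¬ (0:ℤ) ≤ j := by
    intro h
    simp only [tile13, h, if_true, Set.mem_Icc] at hj
    have : (0:ℝ) ≤ (j:ℝ) := by exact_mod_cast h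
    linarith [hj.1]
  simp only [tile13, hj', if_false, Set.mem_Icc] at hj
  have hLi := (tile_sub hi).2
  have hi_lb : min ((x-2)/2) (x-2) ≤ (i:ℝ) := by
    unfold L13 at hLi
    by_cases h0 : 0 ≤ i
    · simp only [h0, if_true] at hLi
      exact (min_le_left _ _).trans (by linarith)
    · simp only [h0, if_false] at hLi
      exact (min_le_right _ _).trans (by linarith)
  have hcast : (n13 x y : ℝ) = |(i:ℝ) - j| := by rw [← hn, natAbs_cast13]
  have := le_abs_self ((i:ℝ) - j)
  linarith [hj.1]

lemma tendsto_t_div (c b : ℝ) (hc : 0 < c) :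
    Tendsto (fun t : ℝ => t / (c*t + b)) atTop (nhds c⁻¹) := by
  have h0 : Tendsto (fun t : ℝ => (c + b * t⁻¹)⁻¹) atTop (nhds c⁻¹) := by
    have h1 : Tendsto (fun t : ℝ => c + b * t⁻¹) atTop (nhds (c + b * 0)) :=
      tendsto_const_nhds.add (tendsto_const_nhds.mul tendsto_inv_atTop_zero)
    have h2 : c + b * 0 = c := by ring
    rw [h2] at h1
    exact h1.inv₀ hc.ne'
  refine h0.congr' ?_
  filter_upwards [eventually_ne_atTop (0:ℝ)] with t ht
  rw [show c + b * t⁻¹ = (c*t+b)/t by field_simp, inv_div]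

lemma tendsto_t_div_one (b : ℝ) : Tendsto (fun t : ℝ => t / (t + b)) atTop (nhds 1) := by
  have h := tendsto_t_div 1 b one_pos
  simp only [one_mul, inv_one] at h
  exact h

lemma tendsto_t_div_half (b : ℝ) : Tendsto (fun t : ℝ => t / ((1/2)*t + b)) atTop (nhds 2) := by
  have h := tendsto_t_div (1/2) b (by norm_num)
  have e1 : ((1:ℝ)/2)⁻¹ = 2 := by norm_num
  rw [e1] at h
  exact h

lemma tendsto_plus13 (x : ℝ) :
    Tendsto (fun t : ℝ => t / (n13 x (x+t) : ℝ)) atTop (nhds 2) := by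
  obtain ⟨i, hi⟩ := exists_tile13 x
  refine tendsto_of_tendsto_of_tendsto_of_le_of_le'
    (tendsto_t_div_half (|(i:ℝ)| + x/2)) (tendsto_t_div_half (-1)) ?_ ?_
  · filter_upwards [eventually_gt_atTop (2:ℝ), eventually_ge_atTop (-x)] with t ht hx'
    have h1 := n13_ge x (x+t)
    rw [show x - (x+t) = -t by ring, abs_neg, abs_of_nonneg (by linarith : (0:ℝ) ≤ t)] at h1
    have hn_pos : (0:ℝ) < (n13 x (x+t):ℝ) := by linarith
    have hub := right_upper13 hi (by linarith : (0:ℝ) ≤ x + t)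
    have hle : (n13 x (x+t):ℝ) ≤ (1/2)*t + (|(i:ℝ)| + x/2) := by linarith
    gcongr <;> linarith
  · filter_upwards [eventually_gt_atTop (2:ℝ)] with t ht
    have h1 := n13_ge x (x+t)
    rw [show x - (x+t) = -t by ring, abs_neg, abs_of_nonneg (by linarith : (0:ℝ) ≤ t)] at h1
    have hn_pos : (0:ℝ) < (1/2)*t + (-1) := by linarith
    gcongr <;> linarith

lemma tendsto_minus13 (x : ℝ) :
    Tendsto (fun t : ℝ => t / (n13 x (x-t) : ℝ)) atTop (nhds 1) := by
  set c' : ℝ := x - min ((x-2)/2) (x-2) with hc'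
  refine tendsto_of_tendsto_of_tendsto_of_le_of_le'
    (tendsto_t_div_one 4) (tendsto_t_div_one (-c')) ?_ ?_
  · filter_upwards [eventually_gt_atTop (2:ℝ)] with t ht
    have h1 := n13_ge x (x-t)
    rw [show x - (x-t) = t by ring, abs_of_nonneg (by linarith : (0:ℝ) ≤ t)] at h1
    have hn_pos : (0:ℝ) < (n13 x (x-t):ℝ) := by linarith
    have hub := n13_le_global x (x-t)
    rw [show x - (x-t) = t by ring, abs_of_nonneg (by linarith : (0:ℝ) ≤ t)] at hub
    gcongr <;> linarith
  · filter_upwards [eventually_gt_atTop (2:ℝ), eventually_gt_atTop x,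
      eventually_gt_atTop (c' + 1)] with t ht htx htc
    have hlb := left_lower13 (x := x) (show x - t < 0 by linarith)
    have hlb' : t - c' ≤ (n13 x (x-t):ℝ) := by rw [hc']; linarith
    have hpos : (0:ℝ) < t + -c' := by linarith
    gcongr <;> linarith

lemma tendsto_const_two : Tendsto (fun _ : ℝ => (2:ℝ)) atTop (nhds 2) := tendsto_const_nhds

lemma stmt1_core :
    Tendsto (fun t : ℝ => ⨅ x : ℝ, t / (n13 x (x + t) : ℝ)) atTop (nhds 1) := by
  refine tendsto_of_tendsto_of_tendsto_of_le_of_le'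
    (tendsto_t_div_one 4) (tendsto_t_div_one (-2)) ?_ ?_
  · filter_upwards [eventually_gt_atTop (2:ℝ)] with t ht
    refine le_ciInf fun x => ?_
    have h1 := n13_ge x (x+t)
    rw [show x - (x+t) = -t by ring, abs_neg, abs_of_nonneg (by linarith : (0:ℝ) ≤ t)] at h1
    have hn_pos : (0:ℝ) < (n13 x (x+t):ℝ) := by linarith
    have hub := n13_le_global x (x+t)
    rw [show x - (x+t) = -t by ring, abs_neg, abs_of_nonneg (by linarith : (0:ℝ) ≤ t)] at hub
    gcongr <;> linarith
  · filter_upwards [eventually_gt_atTop (2:ℝ)] with t ht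
    have hle : (⨅ x : ℝ, t / (n13 x (x + t) : ℝ)) ≤ t / (n13 (-t) (-t + t) : ℝ) := by
      refine ciInf_le ⟨0, ?_⟩ (-t)
      rintro y ⟨x, rfl⟩
      exact div_nonneg (by linarith) (Nat.cast_nonneg _)
    rw [show -t + t = (0:ℝ) by ring] at hle
    refine hle.trans ?_
    rw [n13_symm]
    have hlb := left_lower13 (x := 0) (show -t < 0 by linarith)
    have hmin : min ((0-2)/2) ((0:ℝ)-2) = -2 := by norm_num
    rw [hmin] at hlb
    have hn_pos : (0:ℝ) < t + -2 := by linarith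
    gcongr <;> linarith

lemma stmt5_core :
    Tendsto (fun t : ℝ => ⨅ x : ℝ, t / (n13 x (x - t) : ℝ)) atTop (nhds 1) := by
  refine tendsto_of_tendsto_of_tendsto_of_le_of_le'
    (tendsto_t_div_one 4) (tendsto_t_div_one (-2)) ?_ ?_
  · filter_upwards [eventually_gt_atTop (2:ℝ)] with t ht
    refine le_ciInf fun x => ?_
    have h1 := n13_ge x (x-t)
    rw [show x - (x-t) = t by ring, abs_of_nonneg (by linarith : (0:ℝ) ≤ t)] at h1
    have hn_pos : (0:ℝ) < (n13 x (x-t):ℝ) := by linarith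
    have hub := n13_le_global x (x-t)
    rw [show x - (x-t) = t by ring, abs_of_nonneg (by linarith : (0:ℝ) ≤ t)] at hub
    gcongr <;> linarith
  · filter_upwards [eventually_gt_atTop (2:ℝ)] with t ht
    have hle : (⨅ x : ℝ, t / (n13 x (x - t) : ℝ)) ≤ t / (n13 0 (0 - t) : ℝ) := by
      refine ciInf_le ⟨0, ?_⟩ 0
      rintro y ⟨x, rfl⟩
      exact div_nonneg (by linarith) (Nat.cast_nonneg _)
    rw [show (0:ℝ) - t = -t by ring] at hle
    refine hle.trans ?_
    have hlb := left_lower13 (x := 0) (show -t < 0 by linarith)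
    have hmin : min ((0-2)/2) ((0:ℝ)-2) = -2 := by norm_num
    rw [hmin] at hlb
    have hn_pos : (0:ℝ) < t + -2 := by linarith
    gcongr <;> linarith

lemma stmt4_core :
    Tendsto (fun t : ℝ => ⨆ x : ℝ, t / (n13 x (x + t) : ℝ)) atTop (nhds 2) := by
  refine tendsto_of_tendsto_of_tendsto_of_le_of_le'
    tendsto_const_two (tendsto_t_div_half (-1)) ?_ ?_
  · filter_upwards [eventually_gt_atTop (2:ℝ)] with t ht
    have hub : ∀ x : ℝ, t / (n13 x (x + t) : ℝ) ≤ t / ((1/2)*t + (-1)) := by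
      intro x
      have h1 := n13_ge x (x+t)
      rw [show x - (x+t) = -t by ring, abs_neg, abs_of_nonneg (by linarith : (0:ℝ) ≤ t)] at h1
      have hpos : (0:ℝ) < (1/2)*t + (-1) := by linarith
      gcongr <;> linarith
    have hBdd : BddAbove (Set.range fun x : ℝ => t / (n13 x (x + t) : ℝ)) := by
      refine ⟨t / ((1/2)*t + (-1)), ?_⟩
      rintro y ⟨x, rfl⟩
      exact hub x
    have h1 := n13_ge 0 (0+t)
    rw [show (0:ℝ) - (0+t) = -t by ring, abs_neg, abs_of_nonneg (by linarith : (0:ℝ) ≤ t)] at h1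
    have hn_pos : (0:ℝ) < (n13 0 (0+t):ℝ) := by linarith
    have hwit : (n13 0 ((0:ℝ)+t) : ℝ) ≤ t/2 := by
      rw [zero_add]
      have hb := n13_le_real zero_tile13 (floor_tile13 (by linarith : (0:ℝ) ≤ t))
      have hf1 : ((⌊t/2⌋:ℤ):ℝ) ≤ t/2 := Int.floor_le _
      have hf0 : (0:ℝ) ≤ ((⌊t/2⌋:ℤ):ℝ) := by
        exact_mod_cast Int.floor_nonneg.mpr (by linarith : (0:ℝ) ≤ t/2)
      have : |((0:ℤ):ℝ) - (⌊t/2⌋:ℤ)| = ((⌊t/2⌋:ℤ):ℝ) := by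
        rw [Int.cast_zero, zero_sub, abs_neg, abs_of_nonneg hf0]
      rw [this] at hb
      linarith
    have h2 : (2:ℝ) ≤ t / (n13 0 ((0:ℝ)+t) : ℝ) := by
      rw [le_div_iff₀ hn_pos]
      linarith
    exact h2.trans (le_ciSup hBdd 0)
  · filter_upwards [eventually_gt_atTop (2:ℝ)] with t ht
    refine ciSup_le fun x => ?_
    have h1 := n13_ge x (x+t)
    rw [show x - (x+t) = -t by ring, abs_neg, abs_of_nonneg (by linarith : (0:ℝ) ≤ t)] at h1
    have hpos : (0:ℝ) < (1/2)*t + (-1) := by linarith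
    gcongr <;> linarith

lemma stmt8_core :
    Tendsto (fun t : ℝ => ⨆ x : ℝ, t / (n13 x (x - t) : ℝ)) atTop (nhds 2) := by
  refine tendsto_of_tendsto_of_tendsto_of_le_of_le'
    tendsto_const_two (tendsto_t_div_half (-1)) ?_ ?_
  · filter_upwards [eventually_gt_atTop (2:ℝ)] with t ht
    have hub : ∀ x : ℝ, t / (n13 x (x - t) : ℝ) ≤ t / ((1/2)*t + (-1)) := by
      intro x
      have h1 := n13_ge x (x-t)
      rw [show x - (x-t) = t by ring, abs_of_nonneg (by linarith : (0:ℝ) ≤ t)] at h1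
      have hpos : (0:ℝ) < (1/2)*t + (-1) := by linarith
      gcongr <;> linarith
    have hBdd : BddAbove (Set.range fun x : ℝ => t / (n13 x (x - t) : ℝ)) := by
      refine ⟨t / ((1/2)*t + (-1)), ?_⟩
      rintro y ⟨x, rfl⟩
      exact hub x
    set X : ℝ := 2*((⌈t⌉:ℤ):ℝ) with hX
    have hceil : t ≤ ((⌈t⌉:ℤ):ℝ) := Int.le_ceil t
    have hceil2 : ((⌈t⌉:ℤ):ℝ) < t + 1 := by
      have := Int.ceil_lt_add_one t
      exact_mod_cast this
    have hipos : (0:ℤ) ≤ ⌈t⌉ - 1 := by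
      have : (2:ℝ) < ((⌈t⌉:ℤ):ℝ) := by linarith
      have h2 : (2:ℤ) < ⌈t⌉ := by exact_mod_cast this
      omega
    have hXmem : X ∈ tile13 (⌈t⌉ - 1) := by
      simp only [tile13, hipos, if_true, Set.mem_Icc, hX]
      push_cast
      constructor <;> linarith
    have hy0 : (0:ℝ) ≤ X - t := by rw [hX]; linarith
    have hb := n13_le_real hXmem (floor_tile13 hy0)
    have hf1 : ((⌊(X-t)/2⌋:ℤ):ℝ) ≤ (X-t)/2 := Int.floor_le _
    have hf2 : (X-t)/2 < ((⌊(X-t)/2⌋:ℤ):ℝ) + 1 := Int.lt_floor_add_one _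
    have habs : |((⌈t⌉ - 1 : ℤ):ℝ) - (⌊(X-t)/2⌋:ℤ)| ≤ t/2 := by
      have hc1 : ((⌈t⌉ - 1 : ℤ):ℝ) = ((⌈t⌉:ℤ):ℝ) - 1 := by push_cast; ring
      rw [hc1, abs_of_nonneg (by rw [hX] at hf1 ⊢; linarith)]
      rw [hX] at hf2
      linarith
    have hwit : (n13 X (X - t) : ℝ) ≤ t/2 := hb.trans habs
    have h1 := n13_ge X (X-t)
    rw [show X - (X-t) = t by ring, abs_of_nonneg (by linarith : (0:ℝ) ≤ t)] at h1
    have hn_pos : (0:ℝ) < (n13 X (X-t):ℝ) := by linarith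
    have h2 : (2:ℝ) ≤ t / (n13 X (X - t) : ℝ) := by
      rw [le_div_iff₀ hn_pos]
      linarith
    exact h2.trans (le_ciSup hBdd X)
  · filter_upwards [eventually_gt_atTop (2:ℝ)] with t ht
    refine ciSup_le fun x => ?_
    have h1 := n13_ge x (x-t)
    rw [show x - (x-t) = t by ring, abs_of_nonneg (by linarith : (0:ℝ) ≤ t)] at h1
    have hpos : (0:ℝ) < (1/2)*t + (-1) := by linarith
    gcongr <;> linarith

/-- for the direction `v = 1`,
`d̲₁(1) = 1` and `d̲₂(1) = d̄₂(1) = d̄₁(1) = 2`; for `v = −1`,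
`d̲₁(−1) = d̲₂(−1) = d̄₂(−1) = 1` and `d̄₁(−1) = 2`. -/
theorem stmt_13 :
    (Filter.liminf (fun t : ℝ => ⨅ x : ℝ, t / (n13 x (x + t) : ℝ)) Filter.atTop = 1) ∧
    (⨅ x : ℝ, Filter.liminf (fun t : ℝ => t / (n13 x (x + t) : ℝ)) Filter.atTop = 2) ∧
    (⨆ x : ℝ, Filter.limsup (fun t : ℝ => t / (n13 x (x + t) : ℝ)) Filter.atTop = 2) ∧
    (Filter.limsup (fun t : ℝ => ⨆ x : ℝ, t / (n13 x (x + t) : ℝ)) Filter.atTop = 2) ∧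
    (Filter.liminf (fun t : ℝ => ⨅ x : ℝ, t / (n13 x (x - t) : ℝ)) Filter.atTop = 1) ∧
    (⨅ x : ℝ, Filter.liminf (fun t : ℝ => t / (n13 x (x - t) : ℝ)) Filter.atTop = 1) ∧
    (⨆ x : ℝ, Filter.limsup (fun t : ℝ => t / (n13 x (x - t) : ℝ)) Filter.atTop = 1) ∧
    (Filter.limsup (fun t : ℝ => ⨆ x : ℝ, t / (n13 x (x - t) : ℝ)) Filter.atTop = 2) := by
  refine ⟨stmt1_core.liminf_eq, ?_, ?_, stmt4_core.limsup_eq,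
    stmt5_core.liminf_eq, ?_, ?_, stmt8_core.limsup_eq⟩
  · have h : ∀ x : ℝ, Filter.liminf (fun t : ℝ => t / (n13 x (x + t) : ℝ)) Filter.atTop = 2 :=
      fun x => (tendsto_plus13 x).liminf_eq
    simp only [h]
    exact ciInf_const
  · have h : ∀ x : ℝ, Filter.limsup (fun t : ℝ => t / (n13 x (x + t) : ℝ)) Filter.atTop = 2 :=
      fun x => (tendsto_plus13 x).limsup_eq
    simp only [h]
    exact ciSup_const
  · have h : ∀ x : ℝ, Filter.liminf (fun t : ℝ => t / (n13 x (x - t) : ℝ)) Filter.atTop = 1 :=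
      fun x => (tendsto_minus13 x).liminf_eq
    simp only [h]
    exact ciInf_const
  · have h : ∀ x : ℝ, Filter.limsup (fun t : ℝ => t / (n13 x (x - t) : ℝ)) Filter.atTop = 1 :=
      fun x => (tendsto_minus13 x).limsup_eq
    simp only [h]
    exact ciSup_const
end

section
/- Let 𝓣 be a lattice periodic Delone tiling of ℝ^l with lattice of periods 𝓛, M translation classes of tiles, and η(v) = min{n(x,y) : x−y = v}. If x ∈ 𝓛 satisfies n(x,0) > 3M − 2, then η(x) > M. -/
open Pointwise

/-- let `𝓣` be a lattice periodic Delone tiling of `ℝ^l` (given here by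
a partition `part` supported by the tiling, an adjacency `adj`, and an action of the
lattice `L` of periods preserving the partition and the adjacency), with `M`
translation classes of tiles, and let `n` be the combinatorial patch distance
(`n x y` is the minimal length of a chain of pairwise-adjacent tiles joining `x` to
`y`) and `η(v) = min{ n(a,b) : a − b = v }`. If `x ∈ L` satisfies
`n(x,0) > 3M − 2`, then `η(x) > M`. -/
theorem stmt_16 {l : ℕ} {ι : Type*}
    (part : ι → Set (EuclideanSpace ℝ (Fin l)))
    (h_part : ∀ x : EuclideanSpace ℝ (Fin l), ∃! i, x ∈ part i)
    (adj : ι → ι → Prop)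
    (h_refl : ∀ i, adj i i) (h_symm : ∀ i j, adj i j → adj j i)
    (h_conn : ∀ i j, ∃ (m : ℕ) (f : ℕ → ι), f 0 = i ∧ f m = j ∧
      ∀ k < m, adj (f k) (f (k + 1)))
    (L : AddSubgroup (EuclideanSpace ℝ (Fin l)))
    (σ : L → ι ≃ ι)
    (hσpart : ∀ (p : L) (i : ι), part (σ p i) = (p : EuclideanSpace ℝ (Fin l)) +ᵥ part i)
    (hσadj : ∀ (p : L) (i j : ι), adj (σ p i) (σ p j) ↔ adj i j)
    (M : ℕ)
    (hM : ∃ reps : Finset ι, reps.card = M ∧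
      (∀ i : ι, ∃ j ∈ reps, ∃ p : L, σ p j = i) ∧
      (∀ j₁ ∈ reps, ∀ j₂ ∈ reps, (∃ p : L, σ p j₁ = j₂) → j₁ = j₂)) :
    let n : EuclideanSpace ℝ (Fin l) → EuclideanSpace ℝ (Fin l) → ℕ :=
      fun x y => sInf {m | ∃ f : ℕ → ι, (∀ k < m, adj (f k) (f (k + 1))) ∧
        x ∈ part (f 0) ∧ y ∈ part (f m)}
    let η : EuclideanSpace ℝ (Fin l) → ℕ :=
      fun v => sInf {m | ∃ a b, a - b = v ∧ n a b = m}
    ∀ x ∈ L, 3 * M - 2 < n x 0 → M < η x := by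
  classical
  intro n η x hx hgt
  have hn : ∀ u v, n u v = sInf {m | ∃ f : ℕ → ι, (∀ k < m, adj (f k) (f (k + 1))) ∧
      u ∈ part (f 0) ∧ v ∈ part (f m)} := fun _ _ => rfl
  have hne : ∀ u v : EuclideanSpace ℝ (Fin l),
      {m | ∃ f : ℕ → ι, (∀ k < m, adj (f k) (f (k + 1))) ∧
        u ∈ part (f 0) ∧ v ∈ part (f m)}.Nonempty := by
    intro u v
    obtain ⟨i, hi, -⟩ := h_part u
    obtain ⟨j, hj, -⟩ := h_part v
    obtain ⟨m, f, hf0, hfm, hadj⟩ := h_conn i j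
    exact ⟨m, f, hadj, hf0 ▸ hi, hfm ▸ hj⟩
  have hmem : ∀ u v : EuclideanSpace ℝ (Fin l), ∃ f : ℕ → ι,
      (∀ k < n u v, adj (f k) (f (k + 1))) ∧ u ∈ part (f 0) ∧ v ∈ part (f (n u v)) := by
    intro u v
    have h := Nat.sInf_mem (hne u v)
    rw [← hn u v] at h
    exact h
  have hle : ∀ (u v : EuclideanSpace ℝ (Fin l)) (m : ℕ) (f : ℕ → ι),
      (∀ k < m, adj (f k) (f (k + 1))) → u ∈ part (f 0) → v ∈ part (f m) → n u v ≤ m := by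
    intro u v m f h1 h2 h3
    rw [hn]
    exact Nat.sInf_le ⟨f, h1, h2, h3⟩
  -- symmetry
  have hsymm_le : ∀ u v, n u v ≤ n v u := by
    intro u v
    obtain ⟨f, hadj, h0, hm⟩ := hmem v u
    refine hle u v (n v u) (fun k => f (n v u - k)) ?_ (by simpa using hm) (by simpa using h0)
    intro k hk
    have h1 : n v u - (k + 1) < n v u := by omega
    have h2 : n v u - (k + 1) + 1 = n v u - k := by omega
    have h3 := hadj _ h1
    rw [h2] at h3
    exact h_symm _ _ h3
  have hsymm : ∀ u v, n u v = n v u := fun u v => le_antisymm (hsymm_le u v) (hsymm_le v u)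
  -- triangle inequality
  have htri : ∀ u v w, n u w ≤ n u v + n v w := by
    intro u v w
    obtain ⟨f, hf, hf0, hf1⟩ := hmem u v
    obtain ⟨g, hg, hg0, hg1⟩ := hmem v w
    obtain ⟨i, -, hiu⟩ := h_part v
    have hfg : f (n u v) = g 0 := by rw [hiu _ hf1, hiu _ hg0]
    set m1 := n u v with hm1
    set m2 := n v w with hm2
    refine hle u w (m1 + m2) (fun k => if k ≤ m1 then f k else g (k - m1)) ?_ ?_ ?_
    · intro k hk
      rcases lt_trichotomy k m1 with h | h | h
      · simp only [if_pos h.le, if_pos (show k + 1 ≤ m1 from h)]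
        exact hf k h
      · simp only [if_pos h.le, if_neg (show ¬ k + 1 ≤ m1 by omega)]
        have h1 : k + 1 - m1 = 1 := by omega
        rw [h1, h, hfg]
        exact hg 0 (by omega)
      · simp only [if_neg (show ¬ k ≤ m1 by omega), if_neg (show ¬ k + 1 ≤ m1 by omega)]
        have h1 : k + 1 - m1 = (k - m1) + 1 := by omega
        rw [h1]
        exact hg (k - m1) (by omega)
    · simp only [if_pos (Nat.zero_le m1)]
      exact hf0
    · rcases Nat.eq_zero_or_pos m2 with h | h
      · simp only [h, Nat.add_zero, if_pos (le_refl m1), hfg]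
        rw [h] at hg1
        exact hg1
      · simp only [if_neg (show ¬ m1 + m2 ≤ m1 by omega), Nat.add_sub_cancel_left]
        exact hg1
  -- translation invariance
  have hinv_le : ∀ (p : L) (u v : EuclideanSpace ℝ (Fin l)),
      n (u + ↑p) (v + ↑p) ≤ n u v := by
    intro p u v
    obtain ⟨f, hf, h0, h1⟩ := hmem u v
    refine hle _ _ (n u v) (fun k => σ p (f k)) (fun k hk => (hσadj p _ _).mpr (hf k hk)) ?_ ?_
    · rw [hσpart]
      exact ⟨u, h0, by simp [vadd_eq_add, add_comm]⟩
    · rw [hσpart]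
      exact ⟨v, h1, by simp [vadd_eq_add, add_comm]⟩
  have hinv : ∀ (p : L) (u v : EuclideanSpace ℝ (Fin l)),
      n (u + ↑p) (v + ↑p) = n u v := by
    intro p u v
    refine le_antisymm (hinv_le p u v) ?_
    have h := hinv_le (-p) (u + ↑p) (v + ↑p)
    rw [AddSubgroup.coe_neg] at h
    rw [show u + ↑p + -↑p = u by abel, show v + ↑p + -↑p = v by abel] at h
    exact h
  obtain ⟨reps, hcard, hrep, -⟩ := hM
  have hM1 : 1 ≤ M := by
    obtain ⟨i, hi, -⟩ := h_part x
    obtain ⟨j, hj, -⟩ := hrep i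
    rw [← hcard]
    exact Finset.card_pos.mpr ⟨j, hj⟩
  -- Lemma A: every point is within combinatorial distance M-1 of a lattice point
  have hA : ∀ c : EuclideanSpace ℝ (Fin l), ∃ p : L, n c ↑p ≤ M - 1 := by
    intro c
    set S : Set ℕ := {m | ∃ p : L, n c ↑p = m} with hS
    have hSne : S.Nonempty := ⟨n c ((0 : L) : EuclideanSpace ℝ (Fin l)), ⟨0, rfl⟩⟩
    obtain ⟨p, hp⟩ := Nat.sInf_mem hSne
    by_contra hcon
    push_neg at hcon
    have hs : M ≤ sInf S := by
      have h1 := hcon p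
      omega
    obtain ⟨f, hf, hc0, hcp⟩ := hmem c ↑p
    rw [hp] at hf hcp
    set s := sInf S with hseq
    choose rp hrps pf hpf using fun k => hrep (f k)
    have key : ∀ i j : ℕ, i < j → j ≤ M → rp i = rp j → False := by
      intro i j hij hjM hreq
      have hjs : j ≤ s := le_trans hjM hs
      have hTadj : ∀ a b, adj a b →
          adj (σ (pf i) ((σ (pf j)).symm a)) (σ (pf i) ((σ (pf j)).symm b)) := by
        intro a b hab
        refine (hσadj (pf i) _ _).mpr ?_
        refine (hσadj (pf j) _ _).mp ?_
        simpa [Equiv.apply_symm_apply] using hab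
      have hTpart : ∀ (t : ι) (z : EuclideanSpace ℝ (Fin l)), z ∈ part t →
          (↑(pf i) + (z - ↑(pf j)) : EuclideanSpace ℝ (Fin l)) ∈
            part (σ (pf i) ((σ (pf j)).symm t)) := by
        intro t z hz
        have ht : t = σ (pf j) ((σ (pf j)).symm t) := (Equiv.apply_symm_apply _ _).symm
        rw [ht, hσpart] at hz
        obtain ⟨y, hy, hyz⟩ := hz
        rw [hσpart]
        refine ⟨y, hy, ?_⟩
        simp only [vadd_eq_add] at hyz ⊢
        rw [← hyz]
        abel
      set s' := s - (j - i) with hs'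
      set h : ℕ → ι := fun k => if k ≤ i then f k
        else σ (pf i) ((σ (pf j)).symm (f (k + (j - i)))) with hh
      have hend : h s' = σ (pf i) ((σ (pf j)).symm (f s)) := by
        by_cases hc : s' ≤ i
        · have h1 : s = j := by omega
          have h2 : s' = i := by omega
          simp only [hh, h2, h1]
          rw [if_pos (le_refl i), ← hpf j, ← hreq, Equiv.symm_apply_apply, hpf i]
        · simp only [hh, if_neg hc]
          have h1 : s' + (j - i) = s := by omega
          rw [h1]
      have hadj' : ∀ k < s', adj (h k) (h (k + 1)) := by
        intro k hk
        by_cases h1 : k + 1 ≤ i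
        · simp only [hh, if_pos h1, if_pos (show k ≤ i by omega)]
          exact hf k (by omega)
        · by_cases h2 : k ≤ i
          · have hki : k = i := by omega
            simp only [hh, if_pos h2, if_neg h1]
            have hji : k + 1 + (j - i) = j + 1 := by omega
            rw [hji, hki, ← hpf i]
            refine (hσadj (pf i) _ _).mpr ?_
            rw [hreq]
            refine (hσadj (pf j) _ _).mp ?_
            rw [Equiv.apply_symm_apply, hpf j]
            exact hf j (by omega)
          · simp only [hh, if_neg h2, if_neg (show ¬ k + 1 ≤ i by omega)]
            have h3 : k + 1 + (j - i) = (k + (j - i)) + 1 := by omega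
            rw [h3]
            exact hTadj _ _ (hf (k + (j - i)) (by omega))
      have h0' : c ∈ part (h 0) := by
        simp only [hh, if_pos (Nat.zero_le i)]
        exact hc0
      have hendmem : (↑(pf i) + (↑p - ↑(pf j)) : EuclideanSpace ℝ (Fin l)) ∈ part (h s') := by
        rw [hend]
        exact hTpart _ _ hcp
      have hq : n c (↑(pf i) + (↑p - ↑(pf j))) ≤ s' := hle _ _ s' h hadj' h0' hendmem
      have hqS : n c ((pf i + p - pf j : L) : EuclideanSpace ℝ (Fin l)) ∈ S :=
        ⟨pf i + p - pf j, rfl⟩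
      have hcoe : ((pf i + p - pf j : L) : EuclideanSpace ℝ (Fin l)) =
          ↑(pf i) + (↑p - ↑(pf j)) := by push_cast; abel
      have hfin := Nat.sInf_le hqS
      rw [hcoe] at hfin
      rw [← hseq] at hfin
      omega
    obtain ⟨i, hi, j, hj, hij, hr⟩ := Finset.exists_ne_map_eq_of_card_lt_of_maps_to
      (s := Finset.range (M + 1)) (t := reps)
      (by rw [hcard, Finset.card_range]; omega) (fun k _ => hrps k)
    simp only [Finset.mem_range] at hi hj
    rcases hij.lt_or_gt with hlt | hlt
    · exact key i j hlt (by omega) hr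
    · exact key j i hlt (by omega) hr.symm
  -- main argument
  by_contra hcon
  push_neg at hcon
  have hηmem : ∃ a b : EuclideanSpace ℝ (Fin l), a - b = x ∧ n a b = η x := by
    have hne' : {m | ∃ a b : EuclideanSpace ℝ (Fin l), a - b = x ∧ n a b = m}.Nonempty :=
      ⟨n x 0, x, 0, sub_zero x, rfl⟩
    have h := Nat.sInf_mem hne'
    exact h
  obtain ⟨a, b, hab, hnab⟩ := hηmem
  obtain ⟨p, hpb⟩ := hA b
  have e1 : n (a - ↑p) (b - ↑p) = n a b := by
    have h := hinv (-p) a b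
    rw [AddSubgroup.coe_neg] at h
    rw [show a + -↑p = a - ↑p by abel, show b + -↑p = b - ↑p by abel] at h
    exact h
  have e2 : n (b - ↑p) 0 = n b ↑p := by
    have h := hinv p (b - ↑p) 0
    rw [show b - ↑p + ↑p = b by abel, show (0 : EuclideanSpace ℝ (Fin l)) + ↑p = ↑p by abel] at h
    exact h.symm
  have e3 : n x (a - ↑p) = n (b - ↑p) 0 := by
    have h := hinv ⟨x, hx⟩ 0 (b - ↑p)
    have c1 : ((⟨x, hx⟩ : L) : EuclideanSpace ℝ (Fin l)) = x := rfl
    rw [c1] at h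
    rw [show (0 : EuclideanSpace ℝ (Fin l)) + x = x by abel,
      show b - ↑p + x = a - ↑p by rw [← hab]; abel] at h
    rw [h]
    exact hsymm 0 (b - ↑p)
  have t1 : n x 0 ≤ n x (a - ↑p) + n (a - ↑p) 0 := htri _ _ _
  have t2 : n (a - ↑p) 0 ≤ n (a - ↑p) (b - ↑p) + n (b - ↑p) 0 := htri _ _ _
  omega
end

section
/- Let 𝓣 be a lattice periodic Delone tiling with lattice 𝓛, M translation classes of tiles, and suppose every x ∈ 𝓛 with n(x,0) > 3M−2 is decomposable. Then every x ∈ 𝓛 \ {0} admits a decomposition x = Σ_{y ∈ 𝓛'} c(y) y with nonnegative integers c(y), where 𝓛' = { y ∈ 𝓛\{0} : n(y,0) ≤ 3M−2 }, satisfying η(x) ≥ Σ_{y ∈ 𝓛'} c(y) η(y). Consequently x/η(x) lies in the convex hull of { y/η(y) : y ∈ 𝓛' }. -/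
/-- let `L` be the lattice of periods of a lattice periodic Delone
tiling with `M` translation classes of tiles, `ν x = n(x,0)` the combinatorial
distance to the origin, and `η(v) = min{n(a,b) : a−b = v} ≥ 1` for `v ∈ L\{0}` (both
symmetric under `v ↦ −v`). Suppose every `x ∈ L` with `ν x > 3M−2` is decomposable.
Then every `x ∈ L \ {0}` can be written as `x = Σ_{y ∈ L'} c(y)·y` with nonnegative
integer coefficients supported on `L' = { y ∈ L\{0} : ν y ≤ 3M−2 }` and
`η(x) ≥ Σ_{y ∈ L'} c(y)·η(y)`; consequently `x/η(x)` lies in the convex hull of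
`{ y/η(y) : y ∈ L' }`. -/
theorem stmt_17 {l : ℕ} (L : AddSubgroup (EuclideanSpace ℝ (Fin l))) (M : ℕ)
    (ν η : EuclideanSpace ℝ (Fin l) → ℕ)
    (hη1 : ∀ y ∈ L, y ≠ 0 → 1 ≤ η y)
    (hηsymm : ∀ y, η (-y) = η y) (hνsymm : ∀ y, ν (-y) = ν y)
    (hfin : {y : EuclideanSpace ℝ (Fin l) | y ∈ L ∧ y ≠ 0 ∧ ν y ≤ 3 * M - 2}.Finite)
    (hdec : ∀ x ∈ L, x ≠ 0 → 3 * M - 2 < ν x →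
      ∃ x₁ ∈ L, ∃ x₂ ∈ L, x₁ ≠ 0 ∧ x₂ ≠ 0 ∧ x = x₁ + x₂ ∧ η x₁ + η x₂ ≤ η x) :
    let L' : Set (EuclideanSpace ℝ (Fin l)) :=
      {y | y ∈ L ∧ y ≠ 0 ∧ ν y ≤ 3 * M - 2}
    ∀ x ∈ L, x ≠ 0 →
      (∃ c : EuclideanSpace ℝ (Fin l) → ℕ,
        (∀ y, c y ≠ 0 → y ∈ L') ∧
        x = ∑ᶠ y, c y • y ∧
        (∑ᶠ y, c y * η y) ≤ η x) ∧
      ((η x : ℝ)⁻¹ • x ∈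
        convexHull ℝ ((fun y => ((η y : ℝ)⁻¹ • y)) '' L')) := by
  intro L'
  classical
  have key : ∀ n : ℕ, ∀ x, x ∈ L → x ≠ 0 → η x = n →
      ∃ c : EuclideanSpace ℝ (Fin l) → ℕ,
        (∀ y, c y ≠ 0 → y ∈ L') ∧
        x = ∑ᶠ y, c y • y ∧
        (∑ᶠ y, c y * η y) ≤ η x := by
    intro n
    induction n using Nat.strong_induction_on with
    | _ n ih =>
      intro x hxL hx0 hηx
      by_cases hν : ν x ≤ 3 * M - 2
      · refine ⟨fun y => if y = x then 1 else 0, ?_, ?_, ?_⟩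
        · intro y hy
          have : y = x := by by_contra h; simp [h] at hy
          subst this; exact ⟨hxL, hx0, hν⟩
        · rw [finsum_eq_single _ x (by intro y hy; simp [hy])]
          simp
        · rw [finsum_eq_single _ x (by intro y hy; simp [hy])]
          simp
      · obtain ⟨x₁, hx₁L, x₂, hx₂L, h1, h2, hsum, hη⟩ :=
          hdec x hxL hx0 (lt_of_not_ge hν)
        have hη1' := hη1 x₁ hx₁L h1
        have hη2' := hη1 x₂ hx₂L h2
        obtain ⟨c₁, hc₁, he₁, hb₁⟩ := ih (η x₁) (by omega) x₁ hx₁L h1 rfl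
        obtain ⟨c₂, hc₂, he₂, hb₂⟩ := ih (η x₂) (by omega) x₂ hx₂L h2 rfl
        have hs₁ : (Function.support fun y => c₁ y • y).Finite :=
          hfin.subset (by intro y hy; exact hc₁ y (by
            intro h; simp [Function.mem_support, h] at hy))
        have hs₂ : (Function.support fun y => c₂ y • y).Finite :=
          hfin.subset (by intro y hy; exact hc₂ y (by
            intro h; simp [Function.mem_support, h] at hy))
        have ht₁ : (Function.support fun y => c₁ y * η y).Finite :=
          hfin.subset (by intro y hy; exact hc₁ y (by
            intro h; simp [Function.mem_support, h] at hy))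
        have ht₂ : (Function.support fun y => c₂ y * η y).Finite :=
          hfin.subset (by intro y hy; exact hc₂ y (by
            intro h; simp [Function.mem_support, h] at hy))
        refine ⟨fun y => c₁ y + c₂ y, ?_, ?_, ?_⟩
        · intro y hy
          simp only at hy
          rcases Nat.eq_zero_or_pos (c₁ y) with h | h
          · exact hc₂ y (by omega)
          · exact hc₁ y (by omega)
        · show x = ∑ᶠ y, (c₁ y + c₂ y) • y
          have h : (∑ᶠ y, (c₁ y + c₂ y) • y) =
              (∑ᶠ y, c₁ y • y) + ∑ᶠ y, c₂ y • y := by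
            rw [← finsum_add_distrib hs₁ hs₂]
            apply finsum_congr; intro y; rw [add_smul]
          rw [h, ← he₁, ← he₂, hsum]
        · show (∑ᶠ y, (c₁ y + c₂ y) * η y) ≤ η x
          have h : (∑ᶠ y, (c₁ y + c₂ y) * η y) =
              (∑ᶠ y, c₁ y * η y) + ∑ᶠ y, c₂ y * η y := by
            rw [← finsum_add_distrib ht₁ ht₂]
            apply finsum_congr; intro y; rw [add_mul]
          rw [h]
          omega
  intro x hxL hx0
  obtain ⟨c, hc, he, hb⟩ := key (η x) x hxL hx0 rfl
  refine ⟨⟨c, hc, he, hb⟩, ?_⟩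
  -- convex hull part
  set T : Finset (EuclideanSpace ℝ (Fin l)) := hfin.toFinset with hT
  have hmemT : ∀ y, y ∈ T ↔ y ∈ L' := by
    intro y; rw [hT, Set.Finite.mem_toFinset]
  have hsupc : (Function.support fun y => c y • y) ⊆ T := by
    intro y hy
    refine (hmemT y).2 (hc y ?_)
    intro h; simp [Function.mem_support, h] at hy
  have hsupc' : (Function.support fun y => c y * η y) ⊆ T := by
    intro y hy
    refine (hmemT y).2 (hc y ?_)
    intro h; simp [Function.mem_support, h] at hy
  have hxsum : x = ∑ y ∈ T, (c y : ℝ) • y := by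
    rw [he, finsum_eq_finset_sum_of_support_subset _ hsupc]
    exact Finset.sum_congr rfl fun y _ => (Nat.cast_smul_eq_nsmul ℝ _ _).symm
  have hbT : (∑ y ∈ T, c y * η y) ≤ η x := by
    rwa [finsum_eq_finset_sum_of_support_subset _ hsupc'] at hb
  -- find y₀ with c y₀ ≠ 0
  have hy₀ : ∃ y₀, c y₀ ≠ 0 := by
    by_contra h
    push_neg at h
    apply hx0
    rw [he, finsum_eq_zero_of_forall_eq_zero]
    intro y; simp [h y]
  obtain ⟨y₀, hcy₀⟩ := hy₀
  have hy₀L' : y₀ ∈ L' := hc y₀ hcy₀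
  have hny₀L' : -y₀ ∈ L' := ⟨L.neg_mem hy₀L'.1, by simpa using hy₀L'.2.1,
    by rw [hνsymm]; exact hy₀L'.2.2⟩
  have hy₀T : y₀ ∈ T := (hmemT y₀).2 hy₀L'
  have hny₀T : -y₀ ∈ T := (hmemT (-y₀)).2 hny₀L'
  have hηx : (0:ℝ) < (η x : ℝ) := by
    exact_mod_cast Nat.lt_of_lt_of_le Nat.zero_lt_one (hη1 x hxL hx0)
  set S : ℝ := ∑ y ∈ T, (c y : ℝ) * (η y : ℝ) with hS
  have hSle : S ≤ (η x : ℝ) := by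
    rw [hS]
    calc (∑ y ∈ T, (c y : ℝ) * (η y : ℝ)) = ((∑ y ∈ T, c y * η y : ℕ) : ℝ) := by
          push_cast; ring_nf
      _ ≤ (η x : ℝ) := by exact_mod_cast hbT
  have hSnn : 0 ≤ S := Finset.sum_nonneg fun y _ => by positivity
  set r : ℝ := 1 - S / (η x : ℝ) with hr
  have hrnn : 0 ≤ r := by
    rw [hr, sub_nonneg, div_le_one hηx]; exact hSle
  set w : EuclideanSpace ℝ (Fin l) → ℝ :=
    fun y => (c y : ℝ) * (η y : ℝ) / (η x : ℝ) +
      ((if y = y₀ then r / 2 else 0) + (if y = -y₀ then r / 2 else 0)) with hw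
  set z : EuclideanSpace ℝ (Fin l) → EuclideanSpace ℝ (Fin l) :=
    fun y => ((η y : ℝ)⁻¹ • y) with hz
  have hwsum : ∑ y ∈ T, w y = 1 := by
    rw [hw]
    rw [Finset.sum_add_distrib, Finset.sum_add_distrib,
      Finset.sum_ite_eq' T y₀, Finset.sum_ite_eq' T (-y₀),
      if_pos hy₀T, if_pos hny₀T, ← Finset.sum_div]
    rw [← hS, hr]; ring
  have hηy : ∀ y ∈ T, (η y : ℝ) ≠ 0 := by
    intro y hy
    have := (hmemT y).1 hy
    have := hη1 y this.1 this.2.1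
    positivity
  have hzny₀ : z (-y₀) = - z y₀ := by
    rw [hz]; simp [hηsymm]
  have hwz : ∑ y ∈ T, w y • z y = (η x : ℝ)⁻¹ • x := by
    rw [hw]
    have : ∀ y ∈ T, ((c y : ℝ) * (η y : ℝ) / (η x : ℝ) +
        ((if y = y₀ then r / 2 else 0) + (if y = -y₀ then r / 2 else 0))) • z y =
        ((c y : ℝ) * (η y : ℝ) / (η x : ℝ)) • z y +
        ((if y = y₀ then (r/2) • z y else 0) + (if y = -y₀ then (r/2) • z y else 0)) := by
      intro y hy
      rw [add_smul, add_smul]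
      congr 1
      congr 1 <;> split <;> simp
    rw [Finset.sum_congr rfl this, Finset.sum_add_distrib, Finset.sum_add_distrib,
      Finset.sum_ite_eq' T y₀, Finset.sum_ite_eq' T (-y₀),
      if_pos hy₀T, if_pos hny₀T, hzny₀]
    have hmain : ∑ y ∈ T, ((c y : ℝ) * (η y : ℝ) / (η x : ℝ)) • z y
        = (η x : ℝ)⁻¹ • x := by
      have hterm : ∀ y ∈ T, ((c y : ℝ) * (η y : ℝ) / (η x : ℝ)) • z y
          = (η x : ℝ)⁻¹ • ((c y : ℝ) • y) := by
        intro y hy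
        rw [hz, smul_smul, smul_smul]
        congr 1
        have hne := hηy y hy
        field_simp
      rw [Finset.sum_congr rfl hterm, ← Finset.smul_sum, ← hxsum]
    rw [hmain]
    simp
  have hmem : T.centerMass w z ∈ convexHull ℝ ((fun y => ((η y : ℝ)⁻¹ • y)) '' L') := by
    apply Finset.centerMass_mem_convexHull
    · intro y hy
      rw [hw]
      have : 0 ≤ (c y : ℝ) * (η y : ℝ) / (η x : ℝ) := by positivity
      have h2 : (0:ℝ) ≤ if y = y₀ then r / 2 else 0 := by
        split
        · exact div_nonneg hrnn two_pos.le
        · exact le_refl 0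
      have h3 : (0:ℝ) ≤ if y = -y₀ then r / 2 else 0 := by
        split
        · exact div_nonneg hrnn two_pos.le
        · exact le_refl 0
      exact add_nonneg this (add_nonneg h2 h3)
    · rw [hwsum]; norm_num
    · intro y hy
      exact ⟨y, (hmemT y).1 hy, rfl⟩
  rwa [Finset.centerMass_eq_of_sum_1 _ _ hwsum, hwz] at hmem
end

section
/- The corona limit of a lattice periodic Delone tiling of ℝ^l (with an adjacency compatible with the lattice translations) exists and is a convex polyhedron symmetric with respect to the origin; it equals the convex hull of the finite set { x/η(x) : x ∈ 𝓛, 0 < n(x,0) ≤ 3M−2 }, where M is the number of translation classes of tiles. -/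
/-!
The combinatorial patch distance is the graph distance `d` in the adjacency graph of the tiles,
on which the lattice `L` acts freely, by isometries, with at most `M` orbits. For a period `p`
let `η p = min_i d(i, p + i)` be its minimal displacement. A shortest path from a tile to an
orbit meets each orbit at most once, so every tile is within `M - 1` of every orbit; hence
`d(i, p + i) ≤ η p + 2(M - 1)` for all `i`, and `η (p + q) ≤ η p + η q + 2(M - 1)`.

If `η p > M`, two of the first `M + 1` tiles of a shortest path from `i` to `p + i` differ by a
period `q`; cutting out that loop writes `p = q + y` with `η q ≤ M` and `η q + η y ≤ η p`. As
`n(q, 0) ≤ η q + 2(M - 1) ≤ 3M - 2`, the period `q` lies in `V`, and induction on `η p` gives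
`p ∈ η(p) • K`. Conversely, up to bounded error a point of `t • K` is an integer combination
`∑ nᵢ vᵢ` of points of `V` with `∑ nᵢ η vᵢ ≤ t`, so its patch distance to `0` is at most
`t + O(1)`. With errors independent of `m`, these two inclusions squeeze `m⁻¹ • supp P⁽ᵐ⁾` to
`K` in the Hausdorff metric.
-/

open Pointwise Metric Filter Topology

/-! ### Walks and graph distance -/

namespace SimpleGraph

variable {V : Type*} {G : SimpleGraph V}

theorem exists_walk_length_le_of_chain {f : ℕ → V} {m : ℕ}
    (hf : ∀ k < m, G.Adj (f k) (f (k + 1)) ∨ f k = f (k + 1)) :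
    ∃ w : G.Walk (f 0) (f m), w.length ≤ m := by
  induction m with
  | zero => exact ⟨.nil, le_rfl⟩
  | succ m ih =>
    obtain ⟨w, hw⟩ := ih fun k hk => hf k (by omega)
    rcases hf m (by omega) with h | h
    · exact ⟨w.concat h, by simp; omega⟩
    · exact ⟨w.copy rfl h, by simp; omega⟩

theorem dist_le_of_chain {f : ℕ → V} {m : ℕ}
    (hf : ∀ k < m, G.Adj (f k) (f (k + 1)) ∨ f k = f (k + 1)) : G.dist (f 0) (f m) ≤ m :=
  have ⟨w, hw⟩ := exists_walk_length_le_of_chain hf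
  (dist_le w).trans hw

theorem Walk.adj_getVert_succ_or_eq {u v : V} (w : G.Walk u v) (k : ℕ) :
    G.Adj (w.getVert k) (w.getVert (k + 1)) ∨ w.getVert k = w.getVert (k + 1) := by
  by_cases hk : k < w.length
  · exact .inl (w.adj_getVert_succ hk)
  · exact .inr (by rw [w.getVert_of_length_le (by omega), w.getVert_of_length_le (by omega)])

theorem Walk.dist_getVert_le {u v : V} (w : G.Walk u v) {a b : ℕ} (hab : a ≤ b) :
    G.dist (w.getVert a) (w.getVert b) ≤ b - a := by
  have h := dist_le_of_chain (G := G) (f := fun k => w.getVert (a + k)) (m := b - a)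
    fun k _ => w.adj_getVert_succ_or_eq (a + k)
  simpa [Nat.add_sub_cancel' hab] using h

theorem fromRel_adj_or_eq_iff {r : V → V → Prop} (hr : ∀ a, r a a) (hs : ∀ a b, r a b → r b a)
    {a b : V} : (fromRel r).Adj a b ∨ a = b ↔ r a b := by
  constructor
  · rintro (⟨-, h | h⟩ | rfl)
    exacts [h, hs _ _ h, hr a]
  · intro h
    by_cases hab : a = b
    exacts [.inr hab, .inl ⟨hab, .inl h⟩]

end SimpleGraph

theorem dist_le_walk_length_mul {V X : Type*} [PseudoMetricSpace X] {G : SimpleGraph V}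
    {f : V → X} {c : ℝ}
    (hf : ∀ a b, G.Adj a b → dist (f a) (f b) ≤ c) {u v : V} (w : G.Walk u v) :
    dist (f u) (f v) ≤ w.length * c := by
  induction w with
  | nil => simp
  | cons h w ih =>
    rw [SimpleGraph.Walk.length_cons, Nat.cast_succ, add_mul, one_mul, add_comm]
    exact (dist_triangle _ _ _).trans (add_le_add (hf _ _ h) ih)

/-! ### Minimal displacement of an isometric group action -/

theorem AddAction.exists_lt_vadd_eq_of_card_orbits_le {Λ V : Type*} [AddGroup Λ] [AddAction Λ V]
    [Finite (orbitRel.Quotient Λ V)] {M : ℕ} (hM : Nat.card (orbitRel.Quotient Λ V) ≤ M)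
    (f : ℕ → V) : ∃ a b, a < b ∧ b ≤ M ∧ ∃ r : Λ, r +ᵥ f a = f b := by
  have := Fintype.ofFinite (orbitRel.Quotient Λ V)
  obtain ⟨x, y, hne, hxy⟩ := Fintype.exists_ne_map_eq_of_card_lt
    (fun k : Fin (M + 1) => (Quotient.mk _ (f k) : orbitRel.Quotient Λ V))
    (by rw [Fintype.card_eq_nat_card, Fintype.card_fin]; exact Nat.lt_succ_of_le hM)
  have hmem : ∀ {a b : Fin (M + 1)}, (Quotient.mk _ (f a) : orbitRel.Quotient Λ V) =
      Quotient.mk _ (f b) → ∃ r : Λ, r +ᵥ f a = f b := fun h =>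
    (mem_orbit_iff).mp (Quotient.exact h.symm)
  rcases lt_or_gt_of_ne (Fin.val_ne_of_ne hne) with h | h
  · exact ⟨x, y, h, by omega, hmem hxy⟩
  · exact ⟨y, x, h, by omega, hmem hxy.symm⟩

namespace SimpleGraph

variable {V Λ : Type*} [AddCommGroup Λ] [AddAction Λ V] {G : SimpleGraph V}

variable (G) in
noncomputable def minDisplacement (p : Λ) : ℕ := ⨅ i, G.dist i (p +ᵥ i)

theorem minDisplacement_le (p : Λ) (i : V) : G.minDisplacement p ≤ G.dist i (p +ᵥ i) :=
  ciInf_le' _ i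

theorem exists_dist_eq_minDisplacement [Nonempty V] (p : Λ) :
    ∃ i, G.dist i (p +ᵥ i) = G.minDisplacement p :=
  ciInf_mem _

theorem minDisplacement_neg [Nonempty V] (p : Λ) :
    G.minDisplacement (-p) = G.minDisplacement p := by
  have key : ∀ p : Λ, G.minDisplacement (-p) ≤ G.minDisplacement p := fun p =>
    le_ciInf fun i => (minDisplacement_le (-p) (p +ᵥ i)).trans_eq (by rw [neg_vadd_vadd, dist_comm])
  exact (key p).antisymm (by simpa using key (-p))

theorem minDisplacement_pos (hG : G.Connected) (hfree : ∀ (p : Λ) (i : V), p +ᵥ i = i → p = 0)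
    {p : Λ} (hp : p ≠ 0) : 0 < G.minDisplacement p := by
  have := hG.nonempty
  obtain ⟨i, hi⟩ := exists_dist_eq_minDisplacement (G := G) p
  exact hi ▸ hG.pos_dist_of_ne fun h => hp (hfree p i h.symm)

-- If `w` meets the orbit of its `a`-th vertex again at step `b`, translating the rest of `w`
-- back by `r` cuts out the loop.
theorem Walk.dist_neg_vadd_le_of_vadd_getVert_eq (hG : G.Connected)
    (hiso : ∀ (p : Λ) (i j : V), G.dist (p +ᵥ i) (p +ᵥ j) = G.dist i j)
    {u v : V} (w : G.Walk u v) {a b : ℕ} (hb : b ≤ w.length) {r : Λ}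
    (hr : r +ᵥ w.getVert a = w.getVert b) : G.dist u (-r +ᵥ v) ≤ a + (w.length - b) := by
  have hend : G.dist (w.getVert a) (-r +ᵥ v) ≤ w.length - b := by
    rw [← hiso r, hr, vadd_neg_vadd]
    simpa using w.dist_getVert_le hb
  have hstart : G.dist u (w.getVert a) ≤ a := by
    simpa using w.dist_getVert_le (Nat.zero_le a)
  exact hG.dist_triangle.trans (add_le_add hstart hend)

-- A shortest path from `i` to the orbit of `j` meets every orbit at most once.
theorem exists_dist_vadd_lt (hG : G.Connected)
    (hiso : ∀ (p : Λ) (i j : V), G.dist (p +ᵥ i) (p +ᵥ j) = G.dist i j)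
    [Finite (AddAction.orbitRel.Quotient Λ V)] {M : ℕ}
    (hM : Nat.card (AddAction.orbitRel.Quotient Λ V) ≤ M) (i j : V) :
    ∃ q : Λ, G.dist i (q +ᵥ j) < M := by
  obtain ⟨q, hmin⟩ : ∃ q : Λ, ∀ q', G.dist i (q +ᵥ j) ≤ G.dist i (q' +ᵥ j) :=
    ⟨_, fun q' => Function.argmin_le (fun q : Λ => G.dist i (q +ᵥ j)) q'⟩
  refine ⟨q, not_le.mp fun hle => ?_⟩
  obtain ⟨w, hw⟩ := hG.exists_walk_length_eq_dist i (q +ᵥ j)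
  obtain ⟨a, b, hab, hbM, r, hr⟩ := AddAction.exists_lt_vadd_eq_of_card_orbits_le hM w.getVert
  have hshort := w.dist_neg_vadd_le_of_vadd_getVert_eq hG hiso (by omega) hr
  have := hmin (-r + q)
  rw [add_vadd] at this
  omega

theorem dist_vadd_le_minDisplacement_add (hG : G.Connected)
    (hiso : ∀ (p : Λ) (i j : V), G.dist (p +ᵥ i) (p +ᵥ j) = G.dist i j)
    [Finite (AddAction.orbitRel.Quotient Λ V)] {M : ℕ}
    (hM : Nat.card (AddAction.orbitRel.Quotient Λ V) ≤ M) (p : Λ) (i : V) :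
    G.dist i (p +ᵥ i) ≤ G.minDisplacement p + 2 * (M - 1) := by
  have := hG.nonempty
  obtain ⟨j, hj⟩ := exists_dist_eq_minDisplacement (G := G) p
  obtain ⟨q, hq⟩ := exists_dist_vadd_lt hG hiso hM i j
  have hmid : G.dist (q +ᵥ j) (p +ᵥ q +ᵥ j) = G.minDisplacement p := by
    rw [vadd_comm, hiso, hj]
  have hlast : G.dist (p +ᵥ q +ᵥ j) (p +ᵥ i) = G.dist i (q +ᵥ j) := by
    rw [hiso, dist_comm]
  have h₁ := hG.dist_triangle (u := i) (v := q +ᵥ j) (w := p +ᵥ i)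
  have h₂ := hG.dist_triangle (u := q +ᵥ j) (v := p +ᵥ q +ᵥ j) (w := p +ᵥ i)
  omega

theorem minDisplacement_add_le (hG : G.Connected)
    (hiso : ∀ (p : Λ) (i j : V), G.dist (p +ᵥ i) (p +ᵥ j) = G.dist i j)
    [Finite (AddAction.orbitRel.Quotient Λ V)] {M : ℕ}
    (hM : Nat.card (AddAction.orbitRel.Quotient Λ V) ≤ M) (p q : Λ) :
    G.minDisplacement (p + q) ≤ G.minDisplacement p + G.minDisplacement q + 2 * (M - 1) := by
  have := hG.nonempty
  obtain ⟨i, hi⟩ := exists_dist_eq_minDisplacement (G := G) p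
  have h := hG.dist_triangle (u := i) (v := p +ᵥ i) (w := (p + q) +ᵥ i)
  rw [add_vadd, hiso] at h
  have := dist_vadd_le_minDisplacement_add hG hiso hM q i
  have := minDisplacement_le (G := G) (p + q) i
  rw [add_vadd] at this
  omega

theorem minDisplacement_nsmul_le (hG : G.Connected)
    (hiso : ∀ (p : Λ) (i j : V), G.dist (p +ᵥ i) (p +ᵥ j) = G.dist i j) (k : ℕ) (p : Λ) :
    G.minDisplacement (k • p) ≤ k * G.minDisplacement p := by
  have := hG.nonempty
  obtain ⟨i, hi⟩ := exists_dist_eq_minDisplacement (G := G) p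
  refine (minDisplacement_le _ i).trans ?_
  induction k with
  | zero => simp
  | succ k ih =>
    have h := hG.dist_triangle (u := i) (v := (k • p) +ᵥ i) (w := ((k + 1) • p) +ᵥ i)
    rw [succ_nsmul, add_vadd, hiso, hi] at h
    rw [succ_nsmul, add_vadd]
    nlinarith

theorem minDisplacement_sum_le (hG : G.Connected)
    (hiso : ∀ (p : Λ) (i j : V), G.dist (p +ᵥ i) (p +ᵥ j) = G.dist i j)
    [Finite (AddAction.orbitRel.Quotient Λ V)] {M : ℕ}
    (hM : Nat.card (AddAction.orbitRel.Quotient Λ V) ≤ M) {α : Type*} (s : Finset α) (f : α → Λ) :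
    G.minDisplacement (∑ a ∈ s, f a) ≤ ∑ a ∈ s, G.minDisplacement (f a) + 2 * (M - 1) * s.card := by
  classical
  induction s using Finset.induction_on with
  | empty =>
    have := hG.nonempty
    simpa using minDisplacement_le (G := G) (0 : Λ) (Classical.arbitrary V)
  | insert a s ha ih =>
    rw [Finset.sum_insert ha, Finset.sum_insert ha, Finset.card_insert_of_notMem ha]
    have := minDisplacement_add_le hG hiso hM (f a) (∑ x ∈ s, f x)
    nlinarith

theorem exists_add_minDisplacement_le (hG : G.Connected)
    (hiso : ∀ (p : Λ) (i j : V), G.dist (p +ᵥ i) (p +ᵥ j) = G.dist i j)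
    [Finite (AddAction.orbitRel.Quotient Λ V)] {M : ℕ}
    (hM : Nat.card (AddAction.orbitRel.Quotient Λ V) ≤ M) {p : Λ}
    (hp : M < G.minDisplacement p) :
    ∃ q y : Λ, p = q + y ∧ q ≠ 0 ∧ G.minDisplacement q ≤ M ∧
      G.minDisplacement q + G.minDisplacement y ≤ G.minDisplacement p := by
  have := hG.nonempty
  obtain ⟨i, hi⟩ := exists_dist_eq_minDisplacement (G := G) p
  obtain ⟨w, hw⟩ := hG.exists_walk_length_eq_dist i (p +ᵥ i)
  obtain ⟨a, b, hab, hbM, r, hr⟩ := AddAction.exists_lt_vadd_eq_of_card_orbits_le hM w.getVert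
  have hq : G.minDisplacement r ≤ b - a :=
    (minDisplacement_le r _).trans (hr ▸ w.dist_getVert_le hab.le)
  have hy : G.minDisplacement (-r + p) ≤ a + (w.length - b) := by
    refine (minDisplacement_le _ i).trans ?_
    rw [add_vadd]
    exact w.dist_neg_vadd_le_of_vadd_getVert_eq hG hiso (by omega) hr
  have hr0 : r ≠ 0 := by
    rintro rfl
    have := minDisplacement_le (G := G) p i
    simp only [neg_zero, zero_add] at hy
    omega
  exact ⟨r, -r + p, by abel, hr0, by omega, by omega⟩

end SimpleGraph

/-! ### Convex hulls and Hausdorff limits -/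

theorem StarConvex.smul_subset_smul_of_le {E : Type*} [AddCommGroup E] [Module ℝ E] {s : Set E}
    (hs : StarConvex ℝ 0 s) {a b : ℝ} (ha : 0 ≤ a) (hab : a ≤ b) : a • s ⊆ b • s := by
  rintro _ ⟨x, hx, rfl⟩
  rcases (ha.trans hab).eq_or_lt with hb | hb
  · exact ⟨x, hx, by rw [← hb, le_antisymm (hb ▸ hab) ha]⟩
  · refine ⟨(a / b) • x, hs.smul_mem hx (div_nonneg ha hb.le) ((div_le_one hb).mpr hab), ?_⟩
    simp only [smul_smul, mul_div_cancel₀ _ hb.ne']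

section NormedSpace

variable {E : Type*} [NormedAddCommGroup E] [NormedSpace ℝ E]

theorem exists_nat_combination_near_smul_of_mem_convexHull {ι : Type*} (v : ι → E) (c : ι → ℝ)
    (hc : ∀ i, 0 < c i) {k : E} (hk : k ∈ convexHull ℝ (Set.range fun i => (c i)⁻¹ • v i))
    {t : ℝ} (ht : 0 ≤ t) :
    ∃ (s : Finset ι) (n : ι → ℕ), ∑ i ∈ s, (n i : ℝ) * c i ≤ t ∧
      ‖t • k - ∑ i ∈ s, n i • v i‖ ≤ ∑ i ∈ s, ‖v i‖ := by
  rw [convexHull_range_eq_exists_affineCombination] at hk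
  obtain ⟨s, w, hw₀, hw₁, rfl⟩ := hk
  rw [s.affineCombination_eq_linear_combination _ w hw₁]
  set a : ι → ℝ := fun i => t * w i / c i
  have ha : ∀ i ∈ s, 0 ≤ a i := fun i hi => div_nonneg (mul_nonneg ht (hw₀ i hi)) (hc i).le
  refine ⟨s, fun i => ⌊a i⌋₊, ?_, ?_⟩
  · calc ∑ i ∈ s, (⌊a i⌋₊ : ℝ) * c i ≤ ∑ i ∈ s, t * w i := by
          refine Finset.sum_le_sum fun i hi => ?_
          have := mul_le_mul_of_nonneg_right (Nat.floor_le (ha i hi)) (hc i).le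
          rwa [div_mul_cancel₀ _ (hc i).ne'] at this
      _ = t := by rw [← Finset.mul_sum, hw₁, mul_one]
  · have hdiff : t • ∑ i ∈ s, w i • ((c i)⁻¹ • v i) - ∑ i ∈ s, ⌊a i⌋₊ • v i =
        ∑ i ∈ s, (a i - ⌊a i⌋₊) • v i := by
      rw [Finset.smul_sum, ← Finset.sum_sub_distrib]
      refine Finset.sum_congr rfl fun i _ => ?_
      simp only [a, sub_smul, Nat.cast_smul_eq_nsmul, smul_smul, div_eq_mul_inv, mul_assoc]
    rw [hdiff]
    refine (norm_sum_le _ _).trans (Finset.sum_le_sum fun i hi => ?_)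
    rw [norm_smul, Real.norm_of_nonneg (sub_nonneg.mpr (Nat.floor_le (ha i hi)))]
    exact mul_le_of_le_one_left (norm_nonneg _)
      (by linarith [Nat.lt_floor_add_one (a i)])

theorem tendsto_hausdorffDist_inv_smul {A : ℕ → Set E} {K : Set E} {C₁ C₂ : ℝ}
    (h₁ : ∀ᶠ m in atTop, ∀ x ∈ A m, ∃ y ∈ K, dist x ((m : ℝ) • y) ≤ C₁)
    (h₂ : ∀ᶠ m in atTop, ∀ y ∈ K, ∃ x ∈ A m, dist x ((m : ℝ) • y) ≤ C₂) :
    Tendsto (fun m : ℕ => hausdorffDist ((m : ℝ)⁻¹ • A m) K) atTop (𝓝 0) := by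
  set C := max (max C₁ C₂) 0
  refine squeeze_zero' (.of_forall fun _ => hausdorffDist_nonneg) ?_
    (tendsto_const_div_atTop_nhds_zero_nat C)
  filter_upwards [h₁, h₂, eventually_ge_atTop 1] with m hm₁ hm₂ hm
  have hm0 : (0 : ℝ) < m := by exact_mod_cast hm
  have hdist : ∀ x y : E, dist ((m : ℝ)⁻¹ • x) y = dist x ((m : ℝ) • y) / m := fun x y => by
    conv_lhs => rw [← inv_smul_smul₀ hm0.ne' y]
    rw [dist_smul₀, norm_inv, Real.norm_of_nonneg hm0.le, inv_mul_eq_div]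
  refine hausdorffDist_le_of_mem_dist (by positivity) ?_ ?_
  · rintro _ ⟨x, hx, rfl⟩
    obtain ⟨y, hy, hxy⟩ := hm₁ x hx
    refine ⟨y, hy, ?_⟩
    rw [hdist]
    gcongr
    exact hxy.trans ((le_max_left _ _).trans (le_max_left _ _))
  · intro y hy
    obtain ⟨x, hx, hxy⟩ := hm₂ y hy
    refine ⟨_, ⟨x, hx, rfl⟩, ?_⟩
    rw [dist_comm, hdist]
    gcongr
    exact hxy.trans ((le_max_right _ _).trans (le_max_left _ _))

end NormedSpace

/-! ### Periodic tilings -/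

theorem Metric.finite_setOf_mem_closedBall_of_pairwise_le_dist {ι X : Type*} [MetricSpace X]
    [ProperSpace X] {f : ι → X} {ε : ℝ} (hε : 0 < ε)
    (hf : Pairwise fun i j => ε ≤ dist (f i) (f j)) (x : X) (r : ℝ) :
    {i | f i ∈ closedBall x r}.Finite := by
  let _ : TopologicalSpace ι := ⊥
  have : DiscreteTopology ι := ⟨rfl⟩
  exact ((isClosedEmbedding_of_pairwise_le_dist hε hf).isCompact_preimage
    (isCompact_closedBall x r)).finite_of_discrete

theorem relDense_of_basis {E κ : Type*} [NormedAddCommGroup E] [NormedSpace ℝ E] [Fintype κ]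
    {L : AddSubgroup E} (b : Module.Basis κ ℝ E) (hb : ∀ k, b k ∈ L) :
    ∃ ρ, ∀ u : E, ∃ p ∈ L, ‖u - p‖ ≤ ρ := by
  refine ⟨∑ k, ‖b k‖, fun u => ⟨ZSpan.floor b u, ?_, ZSpan.norm_fract_le b u⟩⟩
  have hspan : Submodule.span ℤ (Set.range b) ≤ L.toIntSubmodule :=
    Submodule.span_le.mpr (Set.range_subset_iff.mpr hb)
  exact hspan (ZSpan.floor b u).2

-- Tile `i` is `closure (part i)`; the sets `part i` partition `E`.
structure PeriodicTiling (E ι : Type*) [NormedAddCommGroup E] [NormedSpace ℝ E] where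
  part : ι → Set E
  existsUnique_mem_part : ∀ x, ∃! i, x ∈ part i
  exists_ball_subset : ∃ s > 0, ∀ i, ∃ c, ball c s ⊆ part i
  exists_closedBall_superset : ∃ S, ∀ i, ∃ c, closure (part i) ⊆ closedBall c S
  adj : ι → ι → Prop
  adj_refl : ∀ i, adj i i
  adj_symm : ∀ i j, adj i j → adj j i
  exists_chain : ∀ i j, ∃ (m : ℕ) (f : ℕ → ι), f 0 = i ∧ f m = j ∧ ∀ k < m, adj (f k) (f (k + 1))
  exists_hausdorffDist_le :
    ∃ R, ∀ i j, adj i j → hausdorffDist (closure (part i)) (closure (part j)) ≤ R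
  lattice : AddSubgroup E
  relDense : ∃ ρ, ∀ u : E, ∃ p ∈ lattice, ‖u - p‖ ≤ ρ
  σ : lattice → ι ≃ ι
  part_σ : ∀ p i, part (σ p i) = (p : E) +ᵥ part i
  adj_σ : ∀ p i j, adj (σ p i) (σ p j) ↔ adj i j
  reps : Finset ι
  exists_mem_reps : ∀ i, ∃ j ∈ reps, ∃ p, σ p j = i

namespace PeriodicTiling

variable {E ι : Type*} [NormedAddCommGroup E] [NormedSpace ℝ E] (T : PeriodicTiling E ι)

noncomputable def tileOf (x : E) : ι := (T.existsUnique_mem_part x).exists.choose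

theorem mem_part_tileOf (x : E) : x ∈ T.part (T.tileOf x) :=
  (T.existsUnique_mem_part x).exists.choose_spec

theorem tileOf_eq {x : E} {i : ι} (h : x ∈ T.part i) : T.tileOf x = i :=
  (T.existsUnique_mem_part x).unique (T.mem_part_tileOf x) h

theorem part_nonempty (i : ι) : (T.part i).Nonempty :=
  have ⟨_, hs, h⟩ := T.exists_ball_subset
  have ⟨_, hc⟩ := h i
  ⟨_, hc (mem_ball_self hs)⟩

theorem part_injective : Function.Injective T.part := fun i _ h =>
  have ⟨_, hx⟩ := T.part_nonempty i
  (T.tileOf_eq hx).symm.trans (T.tileOf_eq (h ▸ hx))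

instance : AddAction T.lattice ι where
  vadd p i := T.σ p i
  zero_vadd i := T.part_injective <| by
    change T.part (T.σ 0 i) = _
    rw [T.part_σ, ZeroMemClass.coe_zero, zero_vadd]
  add_vadd p q i := T.part_injective <| by
    change T.part (T.σ (p + q) i) = T.part (T.σ p (T.σ q i))
    rw [T.part_σ, T.part_σ, T.part_σ, AddSubgroup.coe_add, add_vadd]

theorem part_vadd (p : T.lattice) (i : ι) : T.part (p +ᵥ i) = (p : E) +ᵥ T.part i :=
  T.part_σ p i

theorem tileOf_add (p : T.lattice) (x : E) : T.tileOf (p + x) = p +ᵥ T.tileOf x :=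
  T.tileOf_eq (by rw [part_vadd]; exact Set.vadd_mem_vadd_set (T.mem_part_tileOf x))

theorem eq_zero_of_vadd_eq_self {p : T.lattice} {i : ι} (h : p +ᵥ i = i) : p = 0 := by
  obtain ⟨x, hx⟩ := T.part_nonempty i
  obtain ⟨S, hS⟩ := T.exists_closedBall_superset
  obtain ⟨C, hC⟩ := Metric.isBounded_iff.mp
    ((isBounded_closedBall (x := (hS i).choose) (r := S)).subset
      (subset_closure.trans (hS i).choose_spec))
  have hmem : ∀ n : ℕ, x + n • (p : E) ∈ T.part i := by
    intro n
    induction n with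
    | zero => simpa using hx
    | succ n ih =>
      rw [← h, part_vadd, succ_nsmul', ← add_assoc, add_comm x, add_assoc]
      exact Set.vadd_mem_vadd_set ih
  have hle : ∀ n : ℕ, n * ‖(p : E)‖ ≤ C := fun n => by
    simpa [dist_eq_norm, RCLike.norm_nsmul ℝ] using hC (hmem n) hx
  by_contra hp
  have hpos : 0 < ‖(p : E)‖ := norm_pos_iff.mpr (by exact_mod_cast hp)
  obtain ⟨n, hn⟩ := exists_nat_gt (C / ‖(p : E)‖)
  linarith [(div_lt_iff₀ hpos).mp hn, hle n]

noncomputable def graph : SimpleGraph ι := SimpleGraph.fromRel T.adj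

theorem graph_adj_or_eq_iff {i j : ι} : T.graph.Adj i j ∨ i = j ↔ T.adj i j :=
  SimpleGraph.fromRel_adj_or_eq_iff T.adj_refl T.adj_symm

theorem graph_connected : T.graph.Connected := by
  have : Nonempty ι := ⟨T.tileOf 0⟩
  refine ⟨fun i j => ?_⟩
  obtain ⟨m, f, rfl, rfl, hf⟩ := T.exists_chain i j
  obtain ⟨w, -⟩ := SimpleGraph.exists_walk_length_le_of_chain (G := T.graph)
    fun k hk => T.graph_adj_or_eq_iff.mpr (hf k hk)
  exact ⟨w⟩

theorem graph_dist_le_iff {i j : ι} {m : ℕ} : T.graph.dist i j ≤ m ↔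
    ∃ f : ℕ → ι, f 0 = i ∧ f m = j ∧ ∀ k < m, T.adj (f k) (f (k + 1)) := by
  constructor
  · intro h
    obtain ⟨w, hw⟩ := T.graph_connected.exists_walk_length_eq_dist i j
    exact ⟨w.getVert, w.getVert_zero, w.getVert_of_length_le (hw ▸ h),
      fun k _ => T.graph_adj_or_eq_iff.mp (w.adj_getVert_succ_or_eq k)⟩
  · rintro ⟨f, rfl, rfl, hf⟩
    exact SimpleGraph.dist_le_of_chain fun k hk => T.graph_adj_or_eq_iff.mpr (hf k hk)

theorem graph_dist_vadd_vadd (p : T.lattice) (i j : ι) :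
    T.graph.dist (p +ᵥ i) (p +ᵥ j) = T.graph.dist i j := by
  have key : ∀ (p : T.lattice) i j, T.graph.dist (p +ᵥ i) (p +ᵥ j) ≤ T.graph.dist i j := by
    intro p i j
    obtain ⟨f, hf₀, hfm, hf⟩ := (T.graph_dist_le_iff (i := i) (j := j)).mp le_rfl
    exact T.graph_dist_le_iff.mpr ⟨fun k => p +ᵥ f k, congrArg (p +ᵥ ·) hf₀, congrArg (p +ᵥ ·) hfm,
      fun k hk => (T.adj_σ _ _ _).mpr (hf k hk)⟩
  refine (key p i j).antisymm ?_
  simpa using key (-p) (p +ᵥ i) (p +ᵥ j)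

theorem surjective_mk_reps :
    Function.Surjective fun j : T.reps =>
      (Quotient.mk _ j.1 : AddAction.orbitRel.Quotient T.lattice ι) := by
  refine Quotient.ind fun i => ?_
  obtain ⟨j, hj, p, rfl⟩ := T.exists_mem_reps i
  exact ⟨⟨j, hj⟩, Quotient.sound (AddAction.mem_orbit_symm.mp (AddAction.mem_orbit j p))⟩

instance : Finite (AddAction.orbitRel.Quotient T.lattice ι) :=
  Finite.of_surjective _ T.surjective_mk_reps

theorem card_orbits_le : Nat.card (AddAction.orbitRel.Quotient T.lattice ι) ≤ T.reps.card :=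
  (Nat.card_le_card_of_surjective _ T.surjective_mk_reps).trans_eq (by simp)

theorem exists_dist_le_of_mem_closure :
    ∃ S, ∀ i, ∀ x ∈ closure (T.part i), ∀ y ∈ closure (T.part i), dist x y ≤ S := by
  obtain ⟨S, hS⟩ := T.exists_closedBall_superset
  refine ⟨2 * S, fun i x hx y hy => ?_⟩
  obtain ⟨c, hc⟩ := hS i
  linarith [dist_triangle_right x y c, mem_closedBall.mp (hc hx), mem_closedBall.mp (hc hy)]

theorem exists_dist_le_mul_graph_dist : ∃ C, ∀ i j, ∀ x ∈ closure (T.part i),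
    ∀ y ∈ closure (T.part j), dist x y ≤ C * (T.graph.dist i j + 1) := by
  obtain ⟨S, hS⟩ := T.exists_dist_le_of_mem_closure
  obtain ⟨R, hR⟩ := T.exists_hausdorffDist_le
  choose a ha using fun i => (T.part_nonempty i).closure
  have hS₀ : 0 ≤ S := (dist_self (a (T.tileOf 0))).symm.trans_le (hS _ _ (ha _) _ (ha _))
  have hR₀ : 0 ≤ R := by simpa using hR _ _ (T.adj_refl (T.tileOf 0))
  have hadj : ∀ i j, T.graph.Adj i j → dist (a i) (a j) ≤ R + 1 + S := by
    intro i j h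
    have hb : ∀ k, Bornology.IsBounded (closure (T.part k)) := fun k =>
      isBounded_iff.mpr ⟨S, hS k⟩
    obtain ⟨y, hy, hay⟩ := exists_dist_lt_of_hausdorffDist_lt (ha i)
      ((hR i j (T.graph_adj_or_eq_iff.mp (.inl h))).trans_lt (lt_add_one R))
      (hausdorffEDist_ne_top_of_nonempty_of_bounded ⟨_, ha i⟩ ⟨_, ha j⟩ (hb i) (hb j))
    linarith [dist_triangle (a i) y (a j), hS j y hy (a j) (ha j)]
  refine ⟨2 * S + (R + 1 + S), fun i j x hx y hy => ?_⟩
  obtain ⟨w, hw⟩ := T.graph_connected.exists_walk_length_eq_dist i j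
  have hwalk := dist_le_walk_length_mul hadj w
  rw [hw] at hwalk
  have hd : (0 : ℝ) ≤ T.graph.dist i j := Nat.cast_nonneg _
  nlinarith [dist_triangle4 x (a i) (a j) y, hS i x hx (a i) (ha i), hS j (a j) (ha j) y hy]

theorem finite_setOf_part_inter_closedBall_nonempty [ProperSpace E] (r : ℝ) :
    {i | (T.part i ∩ closedBall 0 r).Nonempty}.Finite := by
  obtain ⟨s, hs, hball⟩ := T.exists_ball_subset
  choose c hc using hball
  obtain ⟨S, hS⟩ := T.exists_dist_le_of_mem_closure
  have hsep : Pairwise fun i j => s ≤ dist (c i) (c j) := fun i j hij =>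
    not_lt.mp fun h => hij <| (T.tileOf_eq (hc i (mem_ball'.mpr h))).symm.trans
      (T.tileOf_eq (hc j (mem_ball_self hs)))
  refine (finite_setOf_mem_closedBall_of_pairwise_le_dist hs hsep 0 (S + r)).subset ?_
  rintro i ⟨x, hxi, hx⟩
  have hci := subset_closure (hc i (mem_ball_self hs))
  exact mem_closedBall.mpr ((dist_triangle _ x _).trans
    (add_le_add (hS i _ hci x (subset_closure hxi)) (mem_closedBall.mp hx)))

theorem vadd_left_injective (i : ι) : Function.Injective fun p : T.lattice => p +ᵥ i :=
  fun p q h => (neg_add_eq_zero.mp (T.eq_zero_of_vadd_eq_self (p := -q + p) (i := i)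
    (by rw [add_vadd]; exact (congrArg (-q +ᵥ ·) h).trans (neg_vadd_vadd q i)))).symm

noncomputable def originTile : ι := T.tileOf 0

theorem tileOf_coe (p : T.lattice) : T.tileOf p = p +ᵥ T.originTile := by
  simpa [originTile] using T.tileOf_add p 0

theorem finite_setOf_norm_le [ProperSpace E] (r : ℝ) :
    {p : T.lattice | ‖(p : E)‖ ≤ r}.Finite := by
  refine ((T.finite_setOf_part_inter_closedBall_nonempty r).preimage
    (f := fun p : T.lattice => T.tileOf p) fun p _ q _ h => ?_).subset fun p hp => ?_
  · simp only [tileOf_coe] at h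
    exact T.vadd_left_injective _ h
  · exact ⟨p, T.mem_part_tileOf p, mem_closedBall_zero_iff.mpr hp⟩

theorem exists_graph_dist_tileOf_le [ProperSpace E] (r : ℝ) :
    ∃ D, ∀ u v : E, dist u v ≤ r → T.graph.dist (T.tileOf u) (T.tileOf v) ≤ D := by
  obtain ⟨ρ, hρ⟩ := T.relDense
  set F := (T.finite_setOf_part_inter_closedBall_nonempty (ρ + r)).toFinset
  refine ⟨(F ×ˢ F).sup fun ij => T.graph.dist ij.1 ij.2, fun u v huv => ?_⟩
  obtain ⟨p, hpL, hp⟩ := hρ u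
  have hF : ∀ w : E, ‖w - p‖ ≤ ρ + r → T.tileOf (w - p) ∈ F := fun w hw => by
    simpa [F] using ⟨w - p, T.mem_part_tileOf _, mem_closedBall_zero_iff.mpr hw⟩
  have htile : ∀ w : E, T.tileOf w = (⟨p, hpL⟩ : T.lattice) +ᵥ T.tileOf (w - p) := fun w => by
    rw [← T.tileOf_add, add_sub_cancel]
  have hv : ‖v - p‖ ≤ ρ + r := by
    linarith [norm_sub_le_norm_sub_add_norm_sub v u p, dist_eq_norm v u, dist_comm u v]
  rw [htile u, htile v, T.graph_dist_vadd_vadd]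
  exact Finset.le_sup (f := fun ij : ι × ι => T.graph.dist ij.1 ij.2)
    (Finset.mk_mem_product (hF u (by linarith [dist_nonneg.trans huv])) (hF v hv))

/-! ### The corona limit -/

-- `patchDist`, `eta`, `shortPeriods`, `coronaLimit` and `coronaSupport` are the paper's `n`,
-- `η`, `V`, `K` and `supp P⁽ᵐ⁾`.
noncomputable def patchDist (x y : E) : ℕ := T.graph.dist (T.tileOf x) (T.tileOf y)

noncomputable def eta (v : E) : ℕ := sInf {m | ∃ a b, a - b = v ∧ T.patchDist a b = m}

noncomputable def shortPeriods : Set E :=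
  {x | x ∈ T.lattice ∧ 0 < T.patchDist x 0 ∧ T.patchDist x 0 ≤ 3 * T.reps.card - 2}

noncomputable def coronaLimit : Set E :=
  convexHull ℝ ((fun x => (T.eta x : ℝ)⁻¹ • x) '' T.shortPeriods)

def coronaSupport (P : Finset ι) (m : ℕ) : Set E :=
  {x | ∃ i ∈ P, ∃ j, T.graph.dist i j ≤ m ∧ x ∈ closure (T.part j)}

theorem sInf_chain_eq_patchDist (x y : E) :
    sInf {m | ∃ f : ℕ → ι, (∀ k < m, T.adj (f k) (f (k + 1))) ∧
      x ∈ T.part (f 0) ∧ y ∈ T.part (f m)} = T.patchDist x y := by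
  have hset : {m | ∃ f : ℕ → ι, (∀ k < m, T.adj (f k) (f (k + 1))) ∧
      x ∈ T.part (f 0) ∧ y ∈ T.part (f m)} = {m | T.patchDist x y ≤ m} := by
    ext m
    simp only [Set.mem_ofPred_eq, patchDist, graph_dist_le_iff]
    constructor
    · rintro ⟨f, hf, hx, hy⟩
      exact ⟨f, (T.tileOf_eq hx).symm, (T.tileOf_eq hy).symm, hf⟩
    · rintro ⟨f, hx, hy, hf⟩
      exact ⟨f, hf, hx ▸ T.mem_part_tileOf x, hy ▸ T.mem_part_tileOf y⟩
  rw [hset]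
  have hmem : T.patchDist x y ∈ {m | T.patchDist x y ≤ m} := le_refl (T.patchDist x y)
  exact le_antisymm (Nat.sInf_le hmem) (le_csInf ⟨_, hmem⟩ fun _ h => h)

theorem coronaSupport_eq (P : Finset ι) (m : ℕ) : T.coronaSupport P m =
    {x | ∃ i ∈ P, ∃ f : ℕ → ι, f 0 = i ∧ (∀ k < m, T.adj (f k) (f (k + 1))) ∧
      x ∈ closure (T.part (f m))} := by
  ext x
  simp only [coronaSupport, Set.mem_ofPred_eq, graph_dist_le_iff]
  constructor
  · rintro ⟨i, hi, j, ⟨f, hf₀, hfm, hf⟩, hx⟩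
    exact ⟨i, hi, f, hf₀, hf, hfm ▸ hx⟩
  · rintro ⟨i, hi, f, hf₀, hf, hx⟩
    exact ⟨i, hi, f m, ⟨f, hf₀, rfl, hf⟩, hx⟩

theorem eta_coe (p : T.lattice) : T.eta p = T.graph.minDisplacement p := by
  have hset : {m | ∃ a b, a - b = (p : E) ∧ T.patchDist a b = m} =
      Set.range fun i => T.graph.dist i (p +ᵥ i) := by
    ext m
    constructor
    · rintro ⟨a, b, hab, rfl⟩
      refine ⟨T.tileOf b, ?_⟩
      rw [patchDist, ← sub_add_cancel a b, hab, T.tileOf_add, SimpleGraph.dist_comm]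
    · rintro ⟨i, rfl⟩
      obtain ⟨b, hb⟩ := T.part_nonempty i
      refine ⟨p + b, b, add_sub_cancel_right _ _, ?_⟩
      rw [patchDist, T.tileOf_add, T.tileOf_eq hb, SimpleGraph.dist_comm]
  rw [eta, hset]
  rfl

theorem patchDist_coe_zero (p : T.lattice) :
    T.patchDist p 0 = T.graph.dist T.originTile (p +ᵥ T.originTile) := by
  rw [patchDist, tileOf_coe, SimpleGraph.dist_comm]
  rfl

theorem patchDist_coe_zero_pos {p : T.lattice} (hp : p ≠ 0) : 0 < T.patchDist p 0 := by
  rw [patchDist_coe_zero]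
  exact T.graph_connected.pos_dist_of_ne fun h => hp (T.eq_zero_of_vadd_eq_self h.symm)

theorem patchDist_coe_zero_le (p : T.lattice) :
    T.patchDist p 0 ≤ T.graph.minDisplacement p + 2 * (T.reps.card - 1) := by
  rw [patchDist_coe_zero]
  exact SimpleGraph.dist_vadd_le_minDisplacement_add T.graph_connected T.graph_dist_vadd_vadd
    T.card_orbits_le p _

theorem coe_mem_shortPeriods {p : T.lattice} (hp : p ≠ 0)
    (h : T.patchDist p 0 ≤ 3 * T.reps.card - 2) : (p : E) ∈ T.shortPeriods :=
  ⟨p.2, T.patchDist_coe_zero_pos hp, h⟩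

theorem neg_mem_shortPeriods {x : E} (hx : x ∈ T.shortPeriods) : -x ∈ T.shortPeriods := by
  have key : T.patchDist (-x) 0 = T.patchDist x 0 := by
    have := patchDist_coe_zero T (-⟨x, hx.1⟩)
    rw [AddSubgroup.coe_neg] at this
    rw [this, ← T.graph_dist_vadd_vadd ⟨x, hx.1⟩, vadd_neg_vadd, SimpleGraph.dist_comm,
      ← patchDist_coe_zero]
  exact ⟨neg_mem hx.1, key ▸ hx.2.1, key ▸ hx.2.2⟩

theorem eta_neg {x : E} (hx : x ∈ T.lattice) : T.eta (-x) = T.eta x := by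
  have := T.graph_connected.nonempty
  have := T.eta_coe (-⟨x, hx⟩)
  rw [AddSubgroup.coe_neg] at this
  rw [this, SimpleGraph.minDisplacement_neg, ← eta_coe]

theorem eta_pos {x : E} (hx : x ∈ T.shortPeriods) : 0 < T.eta x := by
  have hp : (⟨x, hx.1⟩ : T.lattice) ≠ 0 := fun h => by
    simp only [AddSubgroup.mk_eq_zero] at h
    simpa [h, patchDist] using hx.2.1
  rw [show x = ((⟨x, hx.1⟩ : T.lattice) : E) from rfl, eta_coe]
  exact SimpleGraph.minDisplacement_pos T.graph_connected
    (fun _ _ => T.eq_zero_of_vadd_eq_self) hp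

theorem shortPeriods_finite [ProperSpace E] : T.shortPeriods.Finite := by
  obtain ⟨C, hC⟩ := T.exists_dist_le_mul_graph_dist
  refine ((T.finite_setOf_norm_le (C * ((3 * T.reps.card - 2 : ℕ) + 1))).image
    Subtype.val).subset ?_
  rintro x ⟨hxL, -, hx⟩
  refine ⟨⟨x, hxL⟩, ?_, rfl⟩
  have h := hC _ _ x (subset_closure (T.mem_part_tileOf x)) 0 (subset_closure (T.mem_part_tileOf 0))
  rw [dist_zero_right] at h
  have hC₀ : 0 ≤ C := by
    simpa using hC (T.tileOf 0) (T.tileOf 0) 0 (subset_closure (T.mem_part_tileOf 0)) 0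
      (subset_closure (T.mem_part_tileOf 0))
  refine h.trans (mul_le_mul_of_nonneg_left ?_ hC₀)
  exact_mod_cast Nat.add_le_add_right hx 1

theorem convex_coronaLimit : Convex ℝ T.coronaLimit := convex_convexHull ℝ _

theorem neg_mem_coronaLimit {y : E} (hy : y ∈ T.coronaLimit) : -y ∈ T.coronaLimit := by
  have hgen : -((fun x => (T.eta x : ℝ)⁻¹ • x) '' T.shortPeriods) =
      (fun x => (T.eta x : ℝ)⁻¹ • x) '' T.shortPeriods := by
    refine Set.Subset.antisymm ?_ fun z hz => ?_
    · rintro z ⟨x, hx, hxz⟩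
      refine ⟨-x, T.neg_mem_shortPeriods hx, ?_⟩
      dsimp only at hxz ⊢
      rw [T.eta_neg hx.1, smul_neg, hxz, neg_neg]
    · obtain ⟨x, hx, rfl⟩ := hz
      refine ⟨-x, T.neg_mem_shortPeriods hx, ?_⟩
      dsimp only
      rw [T.eta_neg hx.1, smul_neg]
  rw [← Set.mem_neg, coronaLimit, ← convexHull_neg, hgen]
  exact hy

theorem zero_mem_coronaLimit (hK : T.coronaLimit.Nonempty) : (0 : E) ∈ T.coronaLimit := by
  obtain ⟨y, hy⟩ := hK
  simpa using T.convex_coronaLimit hy (T.neg_mem_coronaLimit hy) (by norm_num : (0 : ℝ) ≤ 1 / 2)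
    (by norm_num : (0 : ℝ) ≤ 1 / 2) (by norm_num)

theorem isBounded_coronaLimit [ProperSpace E] : Bornology.IsBounded T.coronaLimit :=
  ((T.shortPeriods_finite.image fun x => (T.eta x : ℝ)⁻¹ • x).isCompact_convexHull ℝ).isBounded

theorem mem_smul_coronaLimit_of_mem_shortPeriods {x : E} (hx : x ∈ T.shortPeriods) :
    x ∈ (T.eta x : ℝ) • T.coronaLimit :=
  ⟨(T.eta x : ℝ)⁻¹ • x, subset_convexHull ℝ _ ⟨x, hx, rfl⟩,
    smul_inv_smul₀ (Nat.cast_ne_zero.mpr (T.eta_pos hx).ne') x⟩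

theorem smul_coronaLimit_subset (hK : T.coronaLimit.Nonempty) {a b : ℝ} (ha : 0 ≤ a)
    (hab : a ≤ b) : a • T.coronaLimit ⊆ b • T.coronaLimit :=
  (T.convex_coronaLimit.starConvex (T.zero_mem_coronaLimit hK)).smul_subset_smul_of_le ha hab

theorem mem_smul_coronaLimit (hK : T.coronaLimit.Nonempty) (p : T.lattice) :
    (p : E) ∈ (T.graph.minDisplacement p : ℝ) • T.coronaLimit := by
  induction hn : T.graph.minDisplacement p using Nat.strong_induction_on generalizing p with
  | _ n ih =>
  subst hn
  have hM := T.card_orbits_le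
  by_cases hshort : T.patchDist p 0 ≤ 3 * T.reps.card - 2
  · rcases eq_or_ne p 0 with rfl | hp
    · exact ⟨0, T.zero_mem_coronaLimit hK, smul_zero _⟩
    · simpa [eta_coe] using
        T.mem_smul_coronaLimit_of_mem_shortPeriods (T.coe_mem_shortPeriods hp hshort)
  · have hlarge : T.reps.card < T.graph.minDisplacement p := by
      have := T.patchDist_coe_zero_le p
      omega
    obtain ⟨q, y, rfl, hq₀, hqM, hsum⟩ := SimpleGraph.exists_add_minDisplacement_le
      T.graph_connected T.graph_dist_vadd_vadd hM hlarge
    have hq : (q : E) ∈ (T.graph.minDisplacement q : ℝ) • T.coronaLimit := by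
      have := T.patchDist_coe_zero_le q
      simpa [eta_coe] using
        T.mem_smul_coronaLimit_of_mem_shortPeriods (T.coe_mem_shortPeriods hq₀ (by omega))
    have hy := ih _ (by
      have := SimpleGraph.minDisplacement_pos T.graph_connected
        (fun _ _ => T.eq_zero_of_vadd_eq_self) hq₀
      omega) y rfl
    have hqy := Set.add_mem_add hq hy
    rw [← T.convex_coronaLimit.add_smul (Nat.cast_nonneg _) (Nat.cast_nonneg _)] at hqy
    exact T.smul_coronaLimit_subset hK (by positivity) (by exact_mod_cast hsum) hqy

theorem exists_mem_coronaLimit_eq_smul (hK : T.coronaLimit.Nonempty) {p : T.lattice} {c : ℝ}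
    (hc : (T.graph.minDisplacement p : ℝ) ≤ c) : ∃ k ∈ T.coronaLimit, (p : E) = c • k :=
  have ⟨k, hk, hkp⟩ :=
    T.smul_coronaLimit_subset hK (Nat.cast_nonneg _) hc (T.mem_smul_coronaLimit hK p)
  ⟨k, hk, hkp.symm⟩

theorem exists_period_near_smul [ProperSpace E] : ∃ C, ∀ t : ℝ, 0 ≤ t → ∀ k ∈ T.coronaLimit,
    ∃ z : T.lattice, (T.graph.minDisplacement z : ℝ) ≤ t + C ∧ ‖t • k - z‖ ≤ C := by
  have := T.shortPeriods_finite.fintype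
  set N : ℝ := 2 * (T.reps.card - 1 : ℕ) * Fintype.card T.shortPeriods
  set B : ℝ := ∑ x : T.shortPeriods, ‖(x : E)‖
  refine ⟨N + B, fun t ht k hk => ?_⟩
  have hN : 0 ≤ N := by positivity
  have hB : 0 ≤ B := by positivity
  rw [coronaLimit, Set.image_eq_range] at hk
  obtain ⟨s, n, hn, hnear⟩ := exists_nat_combination_near_smul_of_mem_convexHull
    (fun x : T.shortPeriods => (x : E)) (fun x => (T.eta x : ℝ))
    (fun x => by exact_mod_cast T.eta_pos x.2) hk ht
  let v : T.shortPeriods → T.lattice := fun x => ⟨x, x.2.1⟩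
  refine ⟨∑ x ∈ s, n x • v x, ?_, ?_⟩
  · have hsum := SimpleGraph.minDisplacement_sum_le T.graph_connected T.graph_dist_vadd_vadd
      T.card_orbits_le s fun x => n x • v x
    have hsmul : ∀ x, T.graph.minDisplacement (n x • v x) ≤ n x * T.eta x := fun x =>
      (SimpleGraph.minDisplacement_nsmul_le T.graph_connected T.graph_dist_vadd_vadd _ _).trans_eq
        (by rw [← eta_coe])
    have hcard : (s.card : ℝ) ≤ Fintype.card T.shortPeriods := by
      exact_mod_cast s.card_le_univ
    have hle : (T.graph.minDisplacement (∑ x ∈ s, n x • v x) : ℝ) ≤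
        ∑ x ∈ s, (n x : ℝ) * T.eta x + 2 * (T.reps.card - 1 : ℕ) * s.card := by
      exact_mod_cast hsum.trans (Nat.add_le_add_right (Finset.sum_le_sum fun x _ => hsmul x) _)
    have : 2 * ((T.reps.card - 1 : ℕ) : ℝ) * s.card ≤ N :=
      mul_le_mul_of_nonneg_left hcard (by positivity)
    linarith
  · have hcoe : ((∑ x ∈ s, n x • v x : T.lattice) : E) = ∑ x ∈ s, n x • (x : E) := by
      simp [v]
    rw [hcoe]
    refine hnear.trans ((Finset.sum_le_univ_sum_of_nonneg fun x => norm_nonneg _).trans ?_)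
    linarith

theorem exists_patchDist_le_of_near_smul [ProperSpace E] (r : ℝ) :
    ∃ C, ∀ t : ℝ, 0 ≤ t → ∀ k ∈ T.coronaLimit, ∀ u : E, ‖u - t • k‖ ≤ r →
      (T.patchDist u 0 : ℝ) ≤ t + C := by
  obtain ⟨C, hC⟩ := T.exists_period_near_smul
  obtain ⟨D, hD⟩ := T.exists_graph_dist_tileOf_le (r + C)
  refine ⟨D + C + 2 * (T.reps.card - 1 : ℕ), fun t ht k hk u hu => ?_⟩
  obtain ⟨z, hz, hzk⟩ := hC t ht k hk
  have hloc : T.graph.dist (T.tileOf u) (T.tileOf z) ≤ D := hD u z <| by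
    rw [dist_eq_norm]
    linarith [norm_sub_le_norm_sub_add_norm_sub u (t • k) z]
  have htri : T.patchDist u 0 ≤ T.graph.dist (T.tileOf u) (T.tileOf z) + T.patchDist z 0 :=
    T.graph_connected.dist_triangle
  have := T.patchDist_coe_zero_le z
  have : (T.patchDist u 0 : ℝ) ≤ D + T.graph.minDisplacement z + 2 * (T.reps.card - 1 : ℕ) := by
    exact_mod_cast
      (by omega : T.patchDist u 0 ≤ D + T.graph.minDisplacement z + 2 * (T.reps.card - 1))
  linarith

theorem exists_dist_smul_le_of_mem_coronaSupport [ProperSpace E] (hK : T.coronaLimit.Nonempty)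
    (P : Finset ι) : ∃ C, ∀ m : ℕ, ∀ x ∈ T.coronaSupport P m,
      ∃ y ∈ T.coronaLimit, dist x ((m : ℝ) • y) ≤ C := by
  obtain ⟨ρ, hρ⟩ := T.relDense
  obtain ⟨S, hS⟩ := T.exists_dist_le_of_mem_closure
  obtain ⟨D, hD⟩ := T.exists_graph_dist_tileOf_le (ρ + S)
  obtain ⟨R, hR⟩ := isBounded_iff_forall_norm_le.mp T.isBounded_coronaLimit
  set C₀ : ℕ := P.sup (fun i => T.graph.dist T.originTile i) + D
  refine ⟨ρ + C₀ * R, fun m x ⟨i, hi, j, hij, hx⟩ => ?_⟩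
  obtain ⟨p, hpL, hp⟩ := hρ x
  obtain ⟨c, hc⟩ := T.part_nonempty j
  have hpj : T.graph.dist (T.tileOf p) j ≤ D := T.tileOf_eq hc ▸ hD p c (by
    rw [← dist_eq_norm, dist_comm] at hp
    linarith [dist_triangle p x c, hS j x hx c (subset_closure hc)])
  have hmd : T.graph.minDisplacement (⟨p, hpL⟩ : T.lattice) ≤ m + C₀ := by
    have h₀ : T.graph.minDisplacement (⟨p, hpL⟩ : T.lattice) ≤
        T.graph.dist T.originTile (T.tileOf p) :=
      (T.graph.minDisplacement_le _ T.originTile).trans_eq (by rw [← T.tileOf_coe])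
    have h₁ := T.graph_connected.dist_triangle (u := T.originTile) (v := i) (w := T.tileOf p)
    have h₂ := T.graph_connected.dist_triangle (u := i) (v := j) (w := T.tileOf p)
    have h₃ : T.graph.dist T.originTile i ≤ P.sup fun i => T.graph.dist T.originTile i :=
      Finset.le_sup (f := fun i => T.graph.dist T.originTile i) hi
    rw [SimpleGraph.dist_comm (u := j)] at h₂
    omega
  obtain ⟨k, hk, hpk⟩ := T.exists_mem_coronaLimit_eq_smul hK (c := m + C₀)
    (by exact_mod_cast hmd)
  refine ⟨k, hk, ?_⟩
  have hpk' : p - (m : ℝ) • k = (C₀ : ℝ) • k := by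
    rw [show p = ((⟨p, hpL⟩ : T.lattice) : E) from rfl, hpk, add_smul, add_sub_cancel_left]
  calc dist x ((m : ℝ) • k) ≤ dist x p + dist p ((m : ℝ) • k) := dist_triangle _ _ _
    _ ≤ ρ + C₀ * R := by
      rw [dist_eq_norm, dist_eq_norm, hpk', norm_smul, Real.norm_natCast]
      gcongr
      exact hR k hk

theorem exists_mem_coronaSupport_dist_smul_le [ProperSpace E] {P : Finset ι}
    (hP : P.Nonempty) : ∃ C, ∀ᶠ m : ℕ in atTop, ∀ y ∈ T.coronaLimit,
      ∃ x ∈ T.coronaSupport P m, dist x ((m : ℝ) • y) ≤ C := by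
  obtain ⟨i, hi⟩ := hP
  obtain ⟨ρ, hρ⟩ := T.relDense
  obtain ⟨C, hC⟩ := T.exists_patchDist_le_of_near_smul ρ
  obtain ⟨R, hR⟩ := isBounded_iff_forall_norm_le.mp T.isBounded_coronaLimit
  set C₂ : ℕ := ⌈C⌉₊ + T.graph.dist i T.originTile
  refine ⟨ρ + C₂ * R, eventually_atTop.mpr ⟨C₂, fun m hm y hy => ?_⟩⟩
  set t : ℝ := m - C₂
  have ht : 0 ≤ t := sub_nonneg.mpr (by exact_mod_cast hm)
  obtain ⟨p, hpL, hp⟩ := hρ (t • y)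
  have hpatch := hC t ht y hy p (by rwa [norm_sub_rev])
  have hmem : p ∈ T.coronaSupport P m := by
    refine ⟨i, hi, T.tileOf p, ?_, subset_closure (T.mem_part_tileOf p)⟩
    have htri := T.graph_connected.dist_triangle (u := i) (v := T.originTile) (w := T.tileOf p)
    rw [SimpleGraph.dist_comm (u := T.originTile)] at htri
    have hceil := Nat.le_ceil C
    have : (T.graph.dist i (T.tileOf p) : ℝ) ≤ m := by
      have : (T.graph.dist i (T.tileOf p) : ℝ) ≤ T.graph.dist i T.originTile + T.patchDist p 0 := by
        exact_mod_cast htri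
      simp only [C₂, t, Nat.cast_add] at *
      linarith
    exact_mod_cast this
  refine ⟨p, hmem, ?_⟩
  calc dist p ((m : ℝ) • y) ≤ dist p (t • y) + dist (t • y) ((m : ℝ) • y) := dist_triangle _ _ _
    _ ≤ ρ + C₂ * R := by
      rw [dist_eq_norm, dist_eq_norm, norm_sub_rev, ← sub_smul, norm_smul]
      simp only [t, sub_sub_cancel_left, norm_neg, Real.norm_natCast]
      gcongr
      exact hR y hy

theorem tendsto_hausdorffDist_coronaSupport [ProperSpace E] {P : Finset ι} (hP : P.Nonempty) :
    Tendsto (fun m : ℕ => hausdorffDist ((m : ℝ)⁻¹ • T.coronaSupport P m) T.coronaLimit)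
      atTop (𝓝 0) := by
  rcases T.coronaLimit.eq_empty_or_nonempty with hK | hK
  · simp [hK]
  · obtain ⟨C₁, h₁⟩ := T.exists_dist_smul_le_of_mem_coronaSupport hK P
    obtain ⟨C₂, h₂⟩ := T.exists_mem_coronaSupport_dist_smul_le hP
    exact tendsto_hausdorffDist_inv_smul (.of_forall h₁) h₂

end PeriodicTiling

theorem stmt_18_general {l : ℕ} {ι : Type*}
    (part : ι → Set (EuclideanSpace ℝ (Fin l)))
    (h_part : ∀ x : EuclideanSpace ℝ (Fin l), ∃! i, x ∈ part i)
    -- Delone axiom (N)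
    (h_N : ∃ s S : ℝ, 0 < s ∧ 0 < S ∧ ∀ i,
      (∃ c, Metric.ball c s ⊆ part i) ∧ ∃ c, closure (part i) ⊆ Metric.closedBall c S)
    (adj : ι → ι → Prop)
    (h_refl : ∀ i, adj i i) (h_symm : ∀ i j, adj i j → adj j i)
    -- adjacency axiom (a): connectivity
    (h_conn : ∀ i j, ∃ (m : ℕ) (f : ℕ → ι), f 0 = i ∧ f m = j ∧
      ∀ k < m, adj (f k) (f (k + 1)))
    -- adjacency axiom (c)
    (h_dist : ∃ R : ℝ, ∀ i j, adj i j →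
      Metric.hausdorffDist (closure (part i)) (closure (part j)) ≤ R)
    (L : AddSubgroup (EuclideanSpace ℝ (Fin l)))
    -- `L` is a lattice: it contains `l` linearly independent periods
    (h_lattice : ∃ b : Module.Basis (Fin l) ℝ (EuclideanSpace ℝ (Fin l)), ∀ k, b k ∈ L)
    (σ : L → ι ≃ ι)
    (hσpart : ∀ (p : L) (i : ι), part (σ p i) = (p : EuclideanSpace ℝ (Fin l)) +ᵥ part i)
    (hσadj : ∀ (p : L) (i j : ι), adj (σ p i) (σ p j) ↔ adj i j)
    (M : ℕ)
    (hM : ∃ reps : Finset ι, reps.card = M ∧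
      (∀ i : ι, ∃ j ∈ reps, ∃ p : L, σ p j = i) ∧
      (∀ j₁ ∈ reps, ∀ j₂ ∈ reps, (∃ p : L, σ p j₁ = j₂) → j₁ = j₂)) :
    -- the combinatorial patch distance
    let n : EuclideanSpace ℝ (Fin l) → EuclideanSpace ℝ (Fin l) → ℕ :=
      fun x y => sInf {m | ∃ f : ℕ → ι, (∀ k < m, adj (f k) (f (k + 1))) ∧
        x ∈ part (f 0) ∧ y ∈ part (f m)}
    let η : EuclideanSpace ℝ (Fin l) → ℕ :=
      fun v => sInf {m | ∃ a b, a - b = v ∧ n a b = m}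
    -- the support of the `m`-th corona of a patch `P`
    let suppC : Finset ι → ℕ → Set (EuclideanSpace ℝ (Fin l)) :=
      fun P m => {x | ∃ i₀ ∈ P, ∃ f : ℕ → ι, f 0 = i₀ ∧
        (∀ k < m, adj (f k) (f (k + 1))) ∧ x ∈ closure (part (f m))}
    let V : Set (EuclideanSpace ℝ (Fin l)) :=
      {x | x ∈ L ∧ 0 < n x 0 ∧ n x 0 ≤ 3 * M - 2}
    let K : Set (EuclideanSpace ℝ (Fin l)) :=
      convexHull ℝ ((fun x => ((η x : ℝ)⁻¹ • x)) '' V)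
    V.Finite ∧ Convex ℝ K ∧ (∀ y ∈ K, -y ∈ K) ∧
    ∀ P : Finset ι, P.Nonempty →
      Filter.Tendsto (fun m : ℕ => Metric.hausdorffDist (((m : ℝ)⁻¹) • suppC P m) K)
        Filter.atTop (nhds 0) := by
  obtain ⟨s, S, hs, -, hN⟩ := h_N
  obtain ⟨reps, rfl, hcover, -⟩ := hM
  obtain ⟨b, hb⟩ := h_lattice
  let T : PeriodicTiling (EuclideanSpace ℝ (Fin l)) ι :=
    { part, existsUnique_mem_part := h_part
      exists_ball_subset := ⟨s, hs, fun i => (hN i).1⟩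
      exists_closedBall_superset := ⟨S, fun i => (hN i).2⟩
      adj, adj_refl := h_refl, adj_symm := h_symm, exists_chain := h_conn
      exists_hausdorffDist_le := h_dist
      lattice := L, relDense := relDense_of_basis b hb
      σ, part_σ := hσpart, adj_σ := hσadj
      reps, exists_mem_reps := hcover }
  have hn : ∀ x y, sInf {m | ∃ f : ℕ → ι, (∀ k < m, adj (f k) (f (k + 1))) ∧
      x ∈ part (f 0) ∧ y ∈ part (f m)} = T.patchDist x y := T.sInf_chain_eq_patchDist
  have hsupp : ∀ P m, {x | ∃ i₀ ∈ P, ∃ f : ℕ → ι, f 0 = i₀ ∧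
      (∀ k < m, adj (f k) (f (k + 1))) ∧ x ∈ closure (part (f m))} = T.coronaSupport P m :=
    fun P m => (T.coronaSupport_eq P m).symm
  simp only [hn, hsupp]
  exact ⟨T.shortPeriods_finite, T.convex_coronaLimit, fun _ => T.neg_mem_coronaLimit,
    fun _ => T.tendsto_hausdorffDist_coronaSupport⟩

/-- the corona limit of a lattice periodic Delone tiling of `ℝ^l`
(with an adjacency compatible with the lattice translations) exists and is a convex
polyhedron symmetric with respect to the origin; it equals the convex hull of the
finite set `{ x/η(x) : x ∈ L, 0 < n(x,0) ≤ 3M−2 }`, where `M` is the number of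
translation classes of tiles, `n` the combinatorial patch distance and
`η(v) = min{n(a,b) : a−b = v}`. The tiling is given by a partition `part` supported
by the tiles (tile `i` is `closure (part i)`), satisfying the Delone axiom (N), with
an adjacency `adj` satisfying the connectivity axioms (a), (b), (c), and a lattice
`L` of full rank acting on the tiling and preserving the adjacency. -/
theorem stmt_18 {l : ℕ} {ι : Type*}
    (part : ι → Set (EuclideanSpace ℝ (Fin l)))
    (h_part : ∀ x : EuclideanSpace ℝ (Fin l), ∃! i, x ∈ part i)
    -- Delone axiom (N)
    (h_N : ∃ s S : ℝ, 0 < s ∧ 0 < S ∧ ∀ i,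
      (∃ c, Metric.ball c s ⊆ part i) ∧ ∃ c, closure (part i) ⊆ Metric.closedBall c S)
    (adj : ι → ι → Prop)
    (h_refl : ∀ i, adj i i) (h_symm : ∀ i j, adj i j → adj j i)
    -- adjacency axiom (a): connectivity
    (h_conn : ∀ i j, ∃ (m : ℕ) (f : ℕ → ι), f 0 = i ∧ f m = j ∧
      ∀ k < m, adj (f k) (f (k + 1)))
    -- adjacency axiom (b)
    (h_bdd : ∃ M₁ : ℕ, ∀ i j, (closure (part i) ∩ closure (part j)).Nonempty →
      ∃ m ≤ M₁, ∃ f : ℕ → ι, f 0 = i ∧ f m = j ∧ ∀ k < m, adj (f k) (f (k + 1)))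
    -- adjacency axiom (c)
    (h_dist : ∃ R : ℝ, ∀ i j, adj i j →
      Metric.hausdorffDist (closure (part i)) (closure (part j)) ≤ R)
    (L : AddSubgroup (EuclideanSpace ℝ (Fin l)))
    -- `L` is a lattice: it contains `l` linearly independent periods
    (h_lattice : ∃ b : Module.Basis (Fin l) ℝ (EuclideanSpace ℝ (Fin l)), ∀ k, b k ∈ L)
    (σ : L → ι ≃ ι)
    (hσpart : ∀ (p : L) (i : ι), part (σ p i) = (p : EuclideanSpace ℝ (Fin l)) +ᵥ part i)
    (hσadj : ∀ (p : L) (i j : ι), adj (σ p i) (σ p j) ↔ adj i j)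
    (M : ℕ)
    (hM : ∃ reps : Finset ι, reps.card = M ∧
      (∀ i : ι, ∃ j ∈ reps, ∃ p : L, σ p j = i) ∧
      (∀ j₁ ∈ reps, ∀ j₂ ∈ reps, (∃ p : L, σ p j₁ = j₂) → j₁ = j₂)) :
    -- the combinatorial patch distance
    let n : EuclideanSpace ℝ (Fin l) → EuclideanSpace ℝ (Fin l) → ℕ :=
      fun x y => sInf {m | ∃ f : ℕ → ι, (∀ k < m, adj (f k) (f (k + 1))) ∧
        x ∈ part (f 0) ∧ y ∈ part (f m)}
    let η : EuclideanSpace ℝ (Fin l) → ℕ :=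
      fun v => sInf {m | ∃ a b, a - b = v ∧ n a b = m}
    -- the support of the `m`-th corona of a patch `P`
    let suppC : Finset ι → ℕ → Set (EuclideanSpace ℝ (Fin l)) :=
      fun P m => {x | ∃ i₀ ∈ P, ∃ f : ℕ → ι, f 0 = i₀ ∧
        (∀ k < m, adj (f k) (f (k + 1))) ∧ x ∈ closure (part (f m))}
    let V : Set (EuclideanSpace ℝ (Fin l)) :=
      {x | x ∈ L ∧ 0 < n x 0 ∧ n x 0 ≤ 3 * M - 2}
    let K : Set (EuclideanSpace ℝ (Fin l)) :=
      convexHull ℝ ((fun x => ((η x : ℝ)⁻¹ • x)) '' V)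
    V.Finite ∧ Convex ℝ K ∧ (∀ y ∈ K, -y ∈ K) ∧
    ∀ P : Finset ι, P.Nonempty →
      Filter.Tendsto (fun m : ℕ => Metric.hausdorffDist (((m : ℝ)⁻¹) • suppC P m) K)
        Filter.atTop (nhds 0) :=
  stmt_18_general part h_part h_N adj h_refl h_symm h_conn h_dist L h_lattice σ hσpart hσadj M hM
end
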